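/- arXiv:1512.03873 — 10 statements merged into one kernel-verified Lean document; each statement's English description precedes it below -/
import Mathlib

section
/- Let P and Q be X×X stochastic matrices (rows of P corresponding to action u and rows of Q to action u+1), and write P_i, Q_i for their i-th rows. Then the following are equivalent: (a) for every l ∈ {1,…,X}, the map i ↦ Σ_{j=l}^X (Q_{ij} − P_{ij}) is increasing in i (tail-sum supermodularity); (b) for every decreasing vector v ∈ ℝ^X (v(1) ≥ v(2) ≥ ⋯ ≥ v(X)) and every i < X, v·(Q_{i+1} − P_{i+1}) ≤ v·(Q_i − P_i). -/
open Finset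

/-- Abel summation over `range n`. -/
lemma abel_aux (n : ℕ) (f S : ℕ → ℝ) :
    ∑ j ∈ range n, f j * (S j - S (j+1))
      = f 0 * S 0 - f (n-1) * S n + ∑ l ∈ Ico 1 n, (f l - f (l-1)) * S l := by
  induction n with
  | zero => simp
  | succ n ih =>
    rw [Finset.sum_range_succ, ih]
    rcases Nat.eq_zero_or_pos n with h | h
    · subst h; simp; ring
    · rw [Finset.sum_Ico_succ_top h]
      simp only [Nat.add_sub_cancel]
      ring

/-- Tail sums. -/
noncomputable def tsum' (X : ℕ) (d : Fin X → ℝ) (l : ℕ) : ℝ :=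
  ∑ j ∈ univ.filter (fun j : Fin X => l ≤ (j : ℕ)), d j

lemma tsum_step (X : ℕ) (d : Fin X → ℝ) (j : ℕ) (hj : j < X) :
    tsum' X d j - tsum' X d (j+1) = d ⟨j, hj⟩ := by
  unfold tsum'
  have : univ.filter (fun k : Fin X => j ≤ (k : ℕ))
      = insert ⟨j, hj⟩ (univ.filter (fun k : Fin X => j + 1 ≤ (k : ℕ))) := by
    ext k
    simp [Fin.ext_iff]
    omega
  rw [this, Finset.sum_insert (by simp)]
  ring

lemma key (X : ℕ) (v : Fin X → ℝ) (d : Fin X → ℝ) (hd : ∑ j, d j = 0) :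
    ∑ j, v j * d j
      = ∑ l ∈ Ico 1 X,
          ((if h : l < X then v ⟨l, h⟩ else 0) - (if h : l - 1 < X then v ⟨l-1, h⟩ else 0))
            * tsum' X d l := by
  set vv : ℕ → ℝ := fun n => if h : n < X then v ⟨n, h⟩ else 0 with hvv
  have hS0 : tsum' X d 0 = 0 := by
    unfold tsum'; simpa using hd
  have hSX : tsum' X d X = 0 := by
    unfold tsum'
    rw [Finset.filter_false_of_mem (by intro k _; exact Nat.not_le.mpr k.isLt)]
    simp
  have h1 : ∑ j, v j * d j = ∑ j ∈ range X, vv j * (tsum' X d j - tsum' X d (j+1)) := by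
    rw [← Fin.sum_univ_eq_sum_range]
    refine Finset.sum_congr rfl fun j _ => ?_
    rw [tsum_step X d j j.isLt]
    simp [hvv, j.isLt]
  rw [h1, abel_aux X vv (tsum' X d), hS0, hSX]
  ring

/-- **Tail-sum supermodularity of transition matrices.** For `X×X` stochastic matrices
`P` (action `u`) and `Q` (action `u+1`), the tail sums `i ↦ Σ_{j≥l}(Q_{ij} − P_{ij})`
are increasing in `i` for every `l` iff for every decreasing vector `v` and every
`i < X`, `v·(Q_{i+1} − P_{i+1}) ≤ v·(Q_i − P_i)`. -/
theorem tailsum_supermodular_iff_submodular_expectations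
    (X : ℕ) (P Q : Matrix (Fin X) (Fin X) ℝ)
    (hP : (∀ i j, 0 ≤ P i j) ∧ ∀ i, ∑ j, P i j = 1)
    (hQ : (∀ i j, 0 ≤ Q i j) ∧ ∀ i, ∑ j, Q i j = 1) :
    (∀ l : Fin X, ∀ i i' : Fin X, i ≤ i' →
        ∑ j ∈ univ.filter (fun j => l ≤ j), (Q i j - P i j)
          ≤ ∑ j ∈ univ.filter (fun j => l ≤ j), (Q i' j - P i' j))
      ↔
    (∀ v : Fin X → ℝ, Antitone v → ∀ i : Fin X, ∀ hi : (i : ℕ) + 1 < X,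
        ∑ j, v j * (Q ⟨(i : ℕ) + 1, hi⟩ j - P ⟨(i : ℕ) + 1, hi⟩ j)
          ≤ ∑ j, v j * (Q i j - P i j)) := by
  -- rows of the difference matrix
  set d : Fin X → Fin X → ℝ := fun i j => Q i j - P i j with hdd
  have hdrow : ∀ i, ∑ j, d i j = 0 := by
    intro i
    simp only [hdd, Finset.sum_sub_distrib, hP.2 i, hQ.2 i, sub_self]
  -- the filter with Fin ≤ equals the filter with ℕ ≤
  have hfilter : ∀ (l : Fin X),
      (univ.filter (fun j : Fin X => l ≤ j)) = univ.filter (fun j : Fin X => (l:ℕ) ≤ (j:ℕ)) := by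
    intro l; apply Finset.filter_congr; intro j _; simp only [Fin.le_def]
  have htS : ∀ (l : Fin X) (i : Fin X),
      ∑ j ∈ univ.filter (fun j => l ≤ j), (Q i j - P i j) = tsum' X (d i) (l : ℕ) := by
    intro l i; rw [hfilter]; rfl
  constructor
  · intro h v hv i hi
    have hkey1 := key X v (d ⟨(i:ℕ)+1, hi⟩) (hdrow _)
    have hkey0 := key X v (d i) (hdrow i)
    simp only [hdd] at hkey1 hkey0
    rw [hkey1, hkey0]
    apply Finset.sum_le_sum
    intro l hl
    rw [Finset.mem_Ico] at hl
    have hlX : l < X := hl.2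
    have hl1 : l - 1 < X := by omega
    rw [dif_pos hlX, dif_pos hl1]
    have hc : v ⟨l, hlX⟩ - v ⟨l-1, hl1⟩ ≤ 0 := by
      have := hv (show (⟨l-1, hl1⟩ : Fin X) ≤ ⟨l, hlX⟩ from Fin.mk_le_mk.mpr (by omega))
      linarith
    have hmono : tsum' X (d i) l ≤ tsum' X (d ⟨(i:ℕ)+1, hi⟩) l := by
      have := h ⟨l, hlX⟩ i ⟨(i:ℕ)+1, hi⟩ (Fin.le_def.mpr (Nat.le_succ _))
      rw [htS, htS] at this
      exact this
    exact mul_le_mul_of_nonpos_left hmono hc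
  · intro h l i i' hii'
    rw [htS, htS]
    rcases Nat.eq_zero_or_pos (l : ℕ) with hl0 | hl0
    · -- both tail sums are full row sums, hence 0
      have hall : ∀ i₀ : Fin X, tsum' X (d i₀) (l:ℕ) = 0 := by
        intro i₀
        unfold tsum'
        rw [hl0, Finset.filter_true_of_mem (by intro k _; omega)]
        exact hdrow i₀
      rw [hall, hall]
    · -- use the indicator vector
      set v : Fin X → ℝ := fun j => if (j:ℕ) < (l:ℕ) then 1 else 0 with hvdef
      have hv : Antitone v := by
        intro a b hab
        have hab' : (a:ℕ) ≤ (b:ℕ) := hab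
        simp only [hvdef]
        by_cases hb : (b:ℕ) < (l:ℕ)
        · have ha : (a:ℕ) < (l:ℕ) := by omega
          simp [ha, hb]
        · rw [if_neg hb]
          split_ifs <;> norm_num
      have hvd : ∀ i₀ : Fin X, ∑ j, v j * d i₀ j = - tsum' X (d i₀) (l:ℕ) := by
        intro i₀
        have hsplit := Finset.sum_filter_add_sum_filter_not univ
          (fun j : Fin X => (l:ℕ) ≤ (j:ℕ)) (d i₀)
        have h2 : ∑ j, v j * d i₀ j
            = ∑ j ∈ univ.filter (fun j : Fin X => ¬ (l:ℕ) ≤ (j:ℕ)), d i₀ j := by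
          rw [Finset.sum_filter]
          refine Finset.sum_congr rfl fun j _ => ?_
          simp only [hvdef]
          by_cases hj : (j:ℕ) < (l:ℕ)
          · simp [hj, show ¬ (l:ℕ) ≤ (j:ℕ) by omega]
          · simp [hj, show (l:ℕ) ≤ (j:ℕ) by omega]
        rw [h2]
        have htot : ∑ x ∈ univ.filter (fun x : Fin X => (l:ℕ) ≤ (x:ℕ)), d i₀ x
            + ∑ x ∈ univ.filter (fun x : Fin X => ¬ (l:ℕ) ≤ (x:ℕ)), d i₀ x = 0 := by
          rw [hsplit]; exact hdrow i₀
        unfold tsum'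
        linarith
      -- adjacent step
      have hstep : ∀ m : Fin X, ∀ hm : (m:ℕ)+1 < X,
          tsum' X (d m) (l:ℕ) ≤ tsum' X (d ⟨(m:ℕ)+1, hm⟩) (l:ℕ) := by
        intro m hm
        have := h v hv m hm
        rw [show (fun j => v j * (Q ⟨(m:ℕ)+1, hm⟩ j - P ⟨(m:ℕ)+1, hm⟩ j))
            = fun j => v j * d ⟨(m:ℕ)+1, hm⟩ j from rfl] at this
        rw [show (fun j => v j * (Q m j - P m j)) = fun j => v j * d m j from rfl] at this
        rw [hvd, hvd] at this
        linarith
      -- chain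
      have hchain : ∀ k : ℕ, ∀ hk : (i:ℕ) + k < X,
          tsum' X (d i) (l:ℕ) ≤ tsum' X (d ⟨(i:ℕ)+k, hk⟩) (l:ℕ) := by
        intro k
        induction k with
        | zero => intro hk; simp
        | succ k ih =>
          intro hk
          have hk' : (i:ℕ) + k < X := by omega
          refine le_trans (ih hk') ?_
          have := hstep ⟨(i:ℕ)+k, hk'⟩ (by show (i:ℕ) + k + 1 < X; omega)
          exact this
      have hk : (i:ℕ) + ((i':ℕ) - (i:ℕ)) < X := by
        have : (i:ℕ) ≤ (i':ℕ) := hii'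
        omega
      have := hchain ((i':ℕ) - (i:ℕ)) hk
      have heq : (⟨(i:ℕ) + ((i':ℕ) - (i:ℕ)), hk⟩ : Fin X) = i' := by
        have : (i:ℕ) ≤ (i':ℕ) := hii'
        apply Fin.ext; simp; omega
      rwa [heq] at this
end

section
/- Consider a finite-horizon MDP on states {1,…,X}, actions {1,…,U} and horizon N, with time-dependent costs c_k(i,u), terminal cost c_N(i), and X×X stochastic matrices P(u,k), and the backward recursion J_N(i) = c_N(i), Q_k(i,u) = c_k(i,u) + Σ_j P_{ij}(u,k) J_{k+1}(j), J_k(i) = min_u Q_k(i,u). Assume (A1) c_N(i) and c_k(i,u) are decreasing in i; (A2) the rows of each P(u,k) are increasing in i with respect to first-order stochastic dominance; (A3) c_k(i,u) is submodular in (i,u): c_k(i,u+1) − c_k(i,u) is decreasing in i; (A4) for every l, k and u < U, Σ_{j=l}^X (P_{ij}(u+1,k) − P_{ij}(u,k)) is increasing in i. Then for every k, Q_k(i,u) is submodular in (i,u), and consequently the policy μ*_k(i) = min argmin_u Q_k(i,u) is increasing in i. -/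
open Finset

/-- Convert a Fin tail-sum to an Ico sum of the ℕ-extension. -/
lemma tail_conv {X : ℕ} (d : Fin X → ℝ) (m : ℕ) (hm : m < X) :
    ∑ j ∈ univ.filter (fun j => (⟨m, hm⟩ : Fin X) ≤ j), d j
      = ∑ j ∈ Finset.Ico m X, (fun n => if h : n < X then d ⟨n, h⟩ else 0) j := by
  have h1 : Finset.Ico m X = (Finset.range X).filter (fun j => m ≤ j) := by
    ext j; simp only [Finset.mem_Ico, Finset.mem_filter, Finset.mem_range]; tauto
  rw [h1, sum_filter, sum_filter,
    ← Fin.sum_univ_eq_sum_range (fun n => if m ≤ n then (if h : n < X then d ⟨n, h⟩ else 0) else 0) X]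
  refine Finset.sum_congr rfl fun j _ => ?_
  simp only [Fin.le_def, j.isLt, dif_pos]

/-- Abel-summation comparison: if `f` is decreasing, `d` and `d'` have the same total
sum, and all tail sums of `d` are dominated by those of `d'`, then
`∑ d' j * f j ≤ ∑ d j * f j`. -/
lemma abel_compare {X : ℕ} (d d' f : Fin X → ℝ)
    (hf : ∀ i j : Fin X, i ≤ j → f j ≤ f i)
    (hsum : ∑ j, d j = ∑ j, d' j)
    (htail : ∀ l : Fin X, ∑ j ∈ univ.filter (fun j => l ≤ j), d j
        ≤ ∑ j ∈ univ.filter (fun j => l ≤ j), d' j) :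
    ∑ j, d' j * f j ≤ ∑ j, d j * f j := by
  rcases Nat.eq_zero_or_pos X with hX0 | hX
  · subst hX0; simp
  set D : ℕ → ℝ := fun n => if h : n < X then d ⟨n, h⟩ else 0 with hD
  set D' : ℕ → ℝ := fun n => if h : n < X then d' ⟨n, h⟩ else 0 with hD'
  set F : ℕ → ℝ := fun n => if h : n < X then f ⟨n, h⟩ else f ⟨X - 1, Nat.sub_lt hX one_pos⟩ with hF
  have hFmono : ∀ n, F (n + 1) ≤ F n := by
    intro n
    by_cases h : n + 1 < X
    · have h' : n < X := Nat.lt_of_succ_lt h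
      simp only [hF, dif_pos h, dif_pos h']
      exact hf _ _ (by simp [Fin.le_def])
    · by_cases h' : n < X
      · have : n = X - 1 := by omega
        simp only [hF, dif_neg h, dif_pos h']
        exact hf _ _ (by simp [Fin.le_def]; omega)
      · simp [hF, dif_neg h, dif_neg h', le_refl]
  -- rewrite sums over Fin as range sums
  have conv1 : ∀ e : Fin X → ℝ, ∑ j, e j * f j
      = ∑ j ∈ range X, F j * (fun n => if h : n < X then e ⟨n, h⟩ else 0) j := by
    intro e
    rw [← Fin.sum_univ_eq_sum_range (fun n => F n * (if h : n < X then e ⟨n, h⟩ else 0)) X]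
    refine Finset.sum_congr rfl fun j _ => ?_
    simp only [hF, j.isLt, dif_pos, mul_comm]
  rw [conv1 d, conv1 d']
  -- Abel summation
  have habel : ∀ g : ℕ → ℝ, ∑ i ∈ range X, F i * g i
      = F (X - 1) * (∑ j ∈ range X, g j)
        - ∑ i ∈ range (X - 1), (F (i + 1) - F i) * (∑ j ∈ range (i + 1), g j) := by
    intro g
    simpa [smul_eq_mul] using Finset.sum_range_by_parts F g X
  rw [habel, habel]
  -- totals are equal
  have hS : ∑ j ∈ range X, D j = ∑ j ∈ range X, D' j := by
    rw [← Fin.sum_univ_eq_sum_range D X, ← Fin.sum_univ_eq_sum_range D' X]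
    calc ∑ j : Fin X, D j.1 = ∑ j, d j := by
            refine Finset.sum_congr rfl fun j _ => ?_; simp [hD, j.isLt]
      _ = ∑ j, d' j := hsum
      _ = ∑ j : Fin X, D' j.1 := by
            refine Finset.sum_congr rfl fun j _ => ?_; simp [hD', j.isLt]
  rw [hS]
  -- compare the correction sums termwise
  have hkey : ∀ i ∈ range (X - 1),
      (F (i + 1) - F i) * (∑ j ∈ range (i + 1), D j)
        ≤ (F (i + 1) - F i) * (∑ j ∈ range (i + 1), D' j) := by
    intro i hi
    have hi1 : i + 1 < X := by simp at hi; omega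
    have hsplit : ∀ g : ℕ → ℝ, ∑ j ∈ range (i + 1), g j
        = ∑ j ∈ range X, g j - ∑ j ∈ Finset.Ico (i + 1) X, g j := by
      intro g
      have := Finset.sum_Ico_consecutive g (Nat.zero_le (i + 1)) (le_of_lt hi1)
      simp only [← Finset.range_eq_Ico] at this
      linarith
    rw [hsplit D, hsplit D', hS, ← tail_conv d (i+1) hi1, ← tail_conv d' (i+1) hi1]
    have := htail ⟨i + 1, hi1⟩
    nlinarith [hFmono i]
  have := Finset.sum_le_sum hkey
  linarith


lemma fin_succ_mono {U : ℕ} (f : Fin U → ℝ)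
    (h : ∀ u : Fin U, ∀ hu : (u : ℕ) + 1 < U, f u ≤ f ⟨(u : ℕ) + 1, hu⟩) :
    ∀ a b : Fin U, a ≤ b → f a ≤ f b := by
  intro a b hab
  obtain ⟨n, hn⟩ := Nat.exists_eq_add_of_le (hab : (a : ℕ) ≤ (b : ℕ))
  induction n generalizing b with
  | zero => have : a = b := Fin.ext (by omega); rw [this]
  | succ m ih =>
    have hm : (a : ℕ) + m < U := by have := b.isLt; omega
    have h1 : f a ≤ f ⟨(a : ℕ) + m, hm⟩ :=
      ih ⟨(a : ℕ) + m, hm⟩ (by simp [Fin.le_def]) (by simp)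
    have hm1 : (a : ℕ) + m + 1 < U := by have := b.isLt; omega
    have h2 := h ⟨(a : ℕ) + m, hm⟩ hm1
    have hbe : b = ⟨(a : ℕ) + m + 1, hm1⟩ := Fin.ext (show (b:ℕ) = (a:ℕ) + m + 1 by omega)
    rw [hbe]
    exact h1.trans h2

/-- **Monotone optimal policy for a finite-horizon MDP.** Under (A1) decreasing costs,
(A2) transition rows increasing in first-order stochastic dominance, (A3) submodular
costs and (A4) tail-sum supermodular transition probabilities, every `Q_k(i,u)` is
submodular in `(i,u)` and the least-argmin policy `μ*_k(i)` is increasing in `i`. -/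
theorem mdp_monotone_optimal_policy
    (X U N : ℕ) (hX : 0 < X) (hU : 0 < U)
    (c : ℕ → Fin X → Fin U → ℝ) (cN : Fin X → ℝ)
    (P : Fin U → ℕ → Matrix (Fin X) (Fin X) ℝ)
    (hstoch : ∀ u k, (∀ i j, 0 ≤ P u k i j) ∧ ∀ i, ∑ j, P u k i j = 1)
    (J : ℕ → Fin X → ℝ) (Q : ℕ → Fin X → Fin U → ℝ)
    -- backward recursion
    (hJN : ∀ i, J N i = cN i)
    (hQ : ∀ k, k < N → ∀ i u, Q k i u = c k i u + ∑ j, P u k i j * J (k + 1) j)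
    (hJ : ∀ k, k < N → ∀ i, (∃ u, J k i = Q k i u) ∧ ∀ u, J k i ≤ Q k i u)
    -- (A1): costs decreasing in the state
    (hA1N : ∀ i i' : Fin X, i ≤ i' → cN i' ≤ cN i)
    (hA1 : ∀ k, k < N → ∀ u, ∀ i i' : Fin X, i ≤ i' → c k i' u ≤ c k i u)
    -- (A2): rows of P(u,k) increasing in i w.r.t. first-order stochastic dominance
    (hA2 : ∀ u k, ∀ i i' : Fin X, i ≤ i' → ∀ l : Fin X,
        ∑ j ∈ univ.filter (fun j => l ≤ j), P u k i j
          ≤ ∑ j ∈ univ.filter (fun j => l ≤ j), P u k i' j)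
    -- (A3): c_k(i,u) submodular in (i,u): c_k(i,u+1) − c_k(i,u) decreasing in i
    (hA3 : ∀ k, k < N → ∀ u : Fin U, ∀ hu : (u : ℕ) + 1 < U, ∀ i i' : Fin X, i ≤ i' →
        c k i' ⟨(u : ℕ) + 1, hu⟩ - c k i' u ≤ c k i ⟨(u : ℕ) + 1, hu⟩ - c k i u)
    -- (A4): Σ_{j≥l}(P_{ij}(u+1,k) − P_{ij}(u,k)) increasing in i
    (hA4 : ∀ k, ∀ u : Fin U, ∀ hu : (u : ℕ) + 1 < U, ∀ l : Fin X, ∀ i i' : Fin X, i ≤ i' →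
        ∑ j ∈ univ.filter (fun j => l ≤ j),
            (P ⟨(u : ℕ) + 1, hu⟩ k i j - P u k i j)
          ≤ ∑ j ∈ univ.filter (fun j => l ≤ j),
              (P ⟨(u : ℕ) + 1, hu⟩ k i' j - P u k i' j))
    -- μ*_k(i) = min argmin_u Q_k(i,u)
    (μ : ℕ → Fin X → Fin U)
    (hμmin : ∀ k, k < N → ∀ i u, Q k i (μ k i) ≤ Q k i u)
    (hμleast : ∀ k, k < N → ∀ i u, (∀ v, Q k i u ≤ Q k i v) → μ k i ≤ u) :
    (∀ k, k < N → ∀ u : Fin U, ∀ hu : (u : ℕ) + 1 < U, ∀ i i' : Fin X, i ≤ i' →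
        Q k i' ⟨(u : ℕ) + 1, hu⟩ - Q k i' u ≤ Q k i ⟨(u : ℕ) + 1, hu⟩ - Q k i u) ∧
    (∀ k, k < N → ∀ i i' : Fin X, i ≤ i' → μ k i ≤ μ k i') := by
  have hP1 : ∀ u k i, ∑ j, P u k i j = 1 := fun u k => (hstoch u k).2
  -- J is decreasing in the state at every stage
  have Jdec : ∀ m k, k + m = N → ∀ i i' : Fin X, i ≤ i' → J k i' ≤ J k i := by
    intro m
    induction m with
    | zero =>
      intro k hk i i' hii
      have hkN : k = N := by omega
      subst hkN
      rw [hJN, hJN]; exact hA1N i i' hii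
    | succ m ih =>
      intro k hk i i' hii
      have hkN : k < N := by omega
      have hJ1 : ∀ a b : Fin X, a ≤ b → J (k + 1) b ≤ J (k + 1) a := by
        intro a b hab; exact ih (k + 1) (by omega) a b hab
      have hQle : ∀ u, Q k i' u ≤ Q k i u := by
        intro u
        rw [hQ k hkN, hQ k hkN]
        have hc := hA1 k hkN u i i' hii
        have hs : ∑ j, P u k i' j * J (k + 1) j ≤ ∑ j, P u k i j * J (k + 1) j :=
          abel_compare (P u k i) (P u k i') (J (k + 1)) hJ1
            (by rw [hP1 u k i, hP1 u k i']) (fun l => hA2 u k i i' hii l)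
        linarith
      obtain ⟨u0, hu0⟩ := (hJ k hkN i).1
      calc J k i' ≤ Q k i' u0 := (hJ k hkN i').2 u0
        _ ≤ Q k i u0 := hQle u0
        _ = J k i := hu0.symm
  have Jdec' : ∀ k, k ≤ N → ∀ i i' : Fin X, i ≤ i' → J k i' ≤ J k i :=
    fun k hk => Jdec (N - k) k (by omega)
  -- submodularity of Q
  have hsub : ∀ k, k < N → ∀ u : Fin U, ∀ hu : (u : ℕ) + 1 < U, ∀ i i' : Fin X, i ≤ i' →
      Q k i' ⟨(u : ℕ) + 1, hu⟩ - Q k i' u ≤ Q k i ⟨(u : ℕ) + 1, hu⟩ - Q k i u := by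
    intro k hk u hu i i' hii
    rw [hQ k hk, hQ k hk, hQ k hk, hQ k hk]
    have hc := hA3 k hk u hu i i' hii
    have hJ1 : ∀ a b : Fin X, a ≤ b → J (k + 1) b ≤ J (k + 1) a := Jdec' (k + 1) (by omega)
    have hs : ∑ j, (P ⟨(u : ℕ) + 1, hu⟩ k i' j - P u k i' j) * J (k + 1) j
        ≤ ∑ j, (P ⟨(u : ℕ) + 1, hu⟩ k i j - P u k i j) * J (k + 1) j :=
      abel_compare _ _ _ hJ1
        (by rw [Finset.sum_sub_distrib, Finset.sum_sub_distrib, hP1, hP1, hP1, hP1])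
        (fun l => hA4 k u hu l i i' hii)
    have e1 : ∀ ii : Fin X,
        ∑ j, (P ⟨(u : ℕ) + 1, hu⟩ k ii j - P u k ii j) * J (k + 1) j
          = ∑ j, P ⟨(u : ℕ) + 1, hu⟩ k ii j * J (k + 1) j
            - ∑ j, P u k ii j * J (k + 1) j := by
      intro ii
      rw [← Finset.sum_sub_distrib]
      exact Finset.sum_congr rfl fun j _ => sub_mul _ _ _
    rw [e1 i, e1 i'] at hs
    linarith
  refine ⟨hsub, ?_⟩
  intro k hk i i' hii
  by_contra hcon
  push_neg at hcon
  have hD : ∀ a b : Fin U, a ≤ b → Q k i a - Q k i' a ≤ Q k i b - Q k i' b := by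
    apply fin_succ_mono (fun v => Q k i v - Q k i' v)
    intro v hv
    have := hsub k hk v hv i i' hii
    show Q k i v - Q k i' v ≤ Q k i ⟨(v : ℕ) + 1, hv⟩ - Q k i' ⟨(v : ℕ) + 1, hv⟩
    linarith
  have h1 : Q k i (μ k i') - Q k i' (μ k i') ≤ Q k i (μ k i) - Q k i' (μ k i) :=
    hD _ _ (le_of_lt hcon)
  have h2 : Q k i (μ k i) ≤ Q k i (μ k i') := hμmin k hk i _
  have h3 : Q k i' (μ k i') ≤ Q k i' (μ k i) := hμmin k hk i' _
  have h4 : Q k i (μ k i') = Q k i (μ k i) := le_antisymm (by linarith) h2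
  have h5 : ∀ v, Q k i (μ k i') ≤ Q k i v := fun v => h4.le.trans (hμmin k hk i v)
  exact absurd (hμleast k hk i _ h5) (not_le.mpr hcon)
end

section
/- Consider two finite-horizon MDPs on states {1,…,X}, actions {1,…,U}, horizon N, with the same costs c_k(i,u) and terminal cost c_N(i), but with stochastic transition matrices P(u) and P̄(u) respectively. Define the backward recursions J_N(i) = J̄_N(i) = c_N(i), Q_k(i,u) = c_k(i,u) + Σ_j P_{ij}(u) J_{k+1}(j), J_k(i) = min_u Q_k(i,u), and analogously Q̄_k, J̄_k with P̄(u). Assume (A1) c_N and c_k(·,u) are decreasing in i; (A2) the rows of each P̄(u) are increasing in i with respect to first-order stochastic dominance; (A5) for every i and u, the i-th row of P(u) first-order stochastically dominates the i-th row of P̄(u). Then J_k(i) ≤ J̄_k(i) for every state i and every k = 0,…,N. -/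
open Finset

lemma fosd_sum {X : ℕ} (p q f : Fin X → ℝ)
    (hsum : ∑ j, p j = ∑ j, q j)
    (hdom : ∀ l : Fin X, ∑ j ∈ univ.filter (fun j => l ≤ j), q j
        ≤ ∑ j ∈ univ.filter (fun j => l ≤ j), p j)
    (hf : ∀ i i' : Fin X, i ≤ i' → f i' ≤ f i) :
    ∑ j, p j * f j ≤ ∑ j, q j * f j := by
  rcases Nat.eq_zero_or_pos X with hX0 | hX0
  · subst hX0; simp
  obtain ⟨m, rfl⟩ := Nat.exists_eq_succ_of_ne_zero hX0.ne'
  set X := m + 1 with hXdef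
  set G : ℕ → ℝ := fun n => ∑ j ∈ univ.filter (fun j : Fin X => n ≤ (j : ℕ)), (q j - p j)
    with hG
  set F : ℕ → ℝ := fun n => if h : n < X then f ⟨n, h⟩ else 0 with hF
  have hG0 : G 0 = 0 := by
    simp only [hG, Finset.sum_sub_distrib]
    rw [Finset.filter_true_of_mem (fun j _ => Nat.zero_le _)]
    exact sub_eq_zero.mpr hsum.symm
  have hGX : ∀ n, X ≤ n → G n = 0 := by
    intro n hn
    have : (univ.filter (fun j : Fin X => n ≤ (j : ℕ))) = ∅ := by
      ext j; simp only [mem_filter, mem_univ, true_and, Finset.notMem_empty, iff_false]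
      omega
    simp [hG, this]
  have hGnonpos : ∀ n, G n ≤ 0 := by
    intro n
    rcases lt_or_ge n X with h | h
    · have hd := hdom ⟨n, h⟩
      have heq : ∀ r : Fin X → ℝ, ∑ j ∈ univ.filter (fun j : Fin X => (⟨n, h⟩ : Fin X) ≤ j), r j
          = ∑ j ∈ univ.filter (fun j : Fin X => n ≤ (j : ℕ)), r j := by
        intro r; apply Finset.sum_congr _ (fun _ _ => rfl)
        ext j; simp [Fin.le_def]
      rw [heq, heq] at hd
      simp only [hG, Finset.sum_sub_distrib]
      linarith
    · simp [hGX n h]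
  have hstep : ∀ n (h : n < X), G n - G (n + 1) = q ⟨n, h⟩ - p ⟨n, h⟩ := by
    intro n h
    have hins : (univ.filter (fun j : Fin X => n ≤ (j : ℕ)))
        = insert ⟨n, h⟩ (univ.filter (fun j : Fin X => n + 1 ≤ (j : ℕ))) := by
      ext j
      simp only [mem_filter, mem_univ, true_and, Finset.mem_insert, Fin.ext_iff]
      omega
    simp only [hG]
    rw [hins, Finset.sum_insert (by simp)]
    ring
  have key : ∑ j, q j * f j - ∑ j, p j * f j = ∑ n ∈ range X, (G n - G (n + 1)) * F n := by
    rw [← Finset.sum_sub_distrib]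
    have h1 : ∀ j : Fin X, q j * f j - p j * f j
        = (fun n => (G n - G (n + 1)) * F n) (j : ℕ) := by
      intro j
      simp only [hstep (j : ℕ) j.isLt, hF, dif_pos j.isLt, Fin.eta]
      ring
    calc ∑ j : Fin X, (q j * f j - p j * f j)
        = ∑ j : Fin X, (fun n => (G n - G (n + 1)) * F n) (j : ℕ) :=
          Finset.sum_congr rfl (fun j _ => h1 j)
      _ = ∑ n ∈ range X, (G n - G (n + 1)) * F n := Fin.sum_univ_eq_sum_range (fun n => (G n - G (n + 1)) * F n) X
  have expand : ∑ n ∈ range X, (G n - G (n + 1)) * F n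
      = ∑ n ∈ range m, G (n + 1) * (F (n + 1) - F n) := by
    have e1 : ∑ n ∈ range X, (G n - G (n + 1)) * F n
        = ∑ n ∈ range X, G n * F n - ∑ n ∈ range X, G (n + 1) * F n := by
      rw [← Finset.sum_sub_distrib]; congr 1; ext n; ring
    rw [e1, Finset.sum_range_succ' (fun n => G n * F n) m,
      Finset.sum_range_succ (fun n => G (n + 1) * F n) m, hG0, hGX (m + 1) le_rfl]
    simp only [zero_mul, add_zero]
    rw [← Finset.sum_sub_distrib]
    exact Finset.sum_congr rfl (fun n _ => by ring)
  have nonneg : 0 ≤ ∑ n ∈ range m, G (n + 1) * (F (n + 1) - F n) := by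
    apply Finset.sum_nonneg
    intro n hn
    rw [Finset.mem_range] at hn
    have h1 : n + 1 < X := by omega
    have h2 : n < X := by omega
    have hFle : F (n + 1) ≤ F n := by
      simp only [hF, dif_pos h1, dif_pos h2]
      exact hf ⟨n, h2⟩ ⟨n + 1, h1⟩ (by simp [Fin.le_def])
    exact mul_nonneg_of_nonpos_of_nonpos (hGnonpos (n + 1)) (by linarith)
  linarith [key, expand]

/-- **Dependence of the optimal MDP cost on the transition matrix.** For two MDPs with
identical costs but transition matrices `P(u)` and `P̄(u)`, if the costs are decreasing
(A1), the rows of each `P̄(u)` are increasing w.r.t. first-order stochastic dominance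
(A2), and each row of `P(u)` first-order stochastically dominates the corresponding
row of `P̄(u)` (A5), then `J_k(i) ≤ J̄_k(i)` for every state `i` and stage `k ≤ N`. -/
theorem mdp_optimal_cost_monotone_in_transition_matrix
    (X U N : ℕ) (hX : 0 < X) (hU : 0 < U)
    (c : ℕ → Fin X → Fin U → ℝ) (cN : Fin X → ℝ)
    (P Pbar : Fin U → Matrix (Fin X) (Fin X) ℝ)
    (hPstoch : ∀ u, (∀ i j, 0 ≤ P u i j) ∧ ∀ i, ∑ j, P u i j = 1)
    (hPbarstoch : ∀ u, (∀ i j, 0 ≤ Pbar u i j) ∧ ∀ i, ∑ j, Pbar u i j = 1)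
    (J Jbar : ℕ → Fin X → ℝ) (Q Qbar : ℕ → Fin X → Fin U → ℝ)
    -- backward recursion for the MDP with transition matrices P(u)
    (hJN : ∀ i, J N i = cN i)
    (hQ : ∀ k, k < N → ∀ i u, Q k i u = c k i u + ∑ j, P u i j * J (k + 1) j)
    (hJ : ∀ k, k < N → ∀ i, (∃ u, J k i = Q k i u) ∧ ∀ u, J k i ≤ Q k i u)
    -- backward recursion for the MDP with transition matrices P̄(u)
    (hJbarN : ∀ i, Jbar N i = cN i)
    (hQbar : ∀ k, k < N → ∀ i u,
        Qbar k i u = c k i u + ∑ j, Pbar u i j * Jbar (k + 1) j)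
    (hJbar : ∀ k, k < N → ∀ i,
        (∃ u, Jbar k i = Qbar k i u) ∧ ∀ u, Jbar k i ≤ Qbar k i u)
    -- (A1): costs decreasing in the state
    (hA1N : ∀ i i' : Fin X, i ≤ i' → cN i' ≤ cN i)
    (hA1 : ∀ k, k < N → ∀ u, ∀ i i' : Fin X, i ≤ i' → c k i' u ≤ c k i u)
    -- (A2): rows of P̄(u) increasing in i w.r.t. first-order stochastic dominance
    (hA2 : ∀ u, ∀ i i' : Fin X, i ≤ i' → ∀ l : Fin X,
        ∑ j ∈ univ.filter (fun j => l ≤ j), Pbar u i j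
          ≤ ∑ j ∈ univ.filter (fun j => l ≤ j), Pbar u i' j)
    -- (A5): row i of P(u) first-order stochastically dominates row i of P̄(u)
    (hA5 : ∀ u, ∀ i : Fin X, ∀ l : Fin X,
        ∑ j ∈ univ.filter (fun j => l ≤ j), Pbar u i j
          ≤ ∑ j ∈ univ.filter (fun j => l ≤ j), P u i j) :
    ∀ k, k ≤ N → ∀ i, J k i ≤ Jbar k i := by
  suffices H : ∀ m k, k + m = N →
      (∀ i i' : Fin X, i ≤ i' → Jbar k i' ≤ Jbar k i) ∧ (∀ i, J k i ≤ Jbar k i) by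
    intro k hk i
    exact (H (N - k) k (by omega)).2 i
  intro m
  induction m with
  | zero =>
    intro k hk
    have hkN : k = N := by omega
    subst hkN
    refine ⟨fun i i' h => ?_, fun i => ?_⟩
    · rw [hJbarN i, hJbarN i']; exact hA1N i i' h
    · rw [hJN i, hJbarN i]
  | succ m ih =>
    intro k hk
    have hkN : k < N := by omega
    obtain ⟨hmono, hle⟩ := ih (k + 1) (by omega)
    refine ⟨fun i i' hii' => ?_, fun i => ?_⟩
    · obtain ⟨⟨u, hu⟩, _⟩ := hJbar k hkN i
      have h2 : Qbar k i' u ≤ Qbar k i u := by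
        rw [hQbar k hkN i' u, hQbar k hkN i u]
        refine add_le_add (hA1 k hkN u i i' hii') ?_
        exact fosd_sum (Pbar u i') (Pbar u i) (Jbar (k + 1))
          (by rw [(hPbarstoch u).2 i', (hPbarstoch u).2 i])
          (fun l => hA2 u i i' hii' l) hmono
      calc Jbar k i' ≤ Qbar k i' u := (hJbar k hkN i').2 u
        _ ≤ Qbar k i u := h2
        _ = Jbar k i := hu.symm
    · obtain ⟨⟨u, hu⟩, _⟩ := hJbar k hkN i
      calc J k i ≤ Q k i u := (hJ k hkN i).2 u
        _ = c k i u + ∑ j, P u i j * J (k + 1) j := hQ k hkN i u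
        _ ≤ c k i u + ∑ j, P u i j * Jbar (k + 1) j := by
            refine add_le_add_right (Finset.sum_le_sum fun j _ => ?_) _
            exact mul_le_mul_of_nonneg_left (hle j) ((hPstoch u).1 i j)
        _ ≤ c k i u + ∑ j, Pbar u i j * Jbar (k + 1) j :=
            add_le_add_right (fosd_sum (P u i) (Pbar u i) (Jbar (k + 1))
              (by rw [(hPstoch u).2 i, (hPbarstoch u).2 i])
              (fun l => hA5 u i l) hmono) _
        _ = Qbar k i u := (hQbar k hkN i u).symm
        _ = Jbar k i := hu.symm
end

section
/- Let P be an X×X stochastic matrix. Then the following are equivalent: (a) P is TP2 (all second-order minors nonnegative); (b) for all probability vectors π1, π2 on {1,…,X}, if π1 MLR-dominates π2 then the predictor updates satisfy P'π1 MLR-dominates P'π2 (where P' is the transpose of P). -/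
/-- **The HMM predictor preserves MLR dominance iff the transition matrix is TP2.**
For an `X×X` stochastic matrix `P`: `P` is TP2 iff for all probability vectors
`π1, π2`, `π1 ≥_r π2` implies `P'π1 ≥_r P'π2`. -/
theorem tp2_iff_predictor_preserves_mlr
    (X : ℕ) (P : Matrix (Fin X) (Fin X) ℝ)
    (hnonneg : ∀ i j, 0 ≤ P i j)
    (hrowsum : ∀ i, ∑ j, P i j = 1) :
    (∀ i1 i2 j1 j2 : Fin X, i1 < i2 → j1 < j2 →
        P i1 j2 * P i2 j1 ≤ P i1 j1 * P i2 j2)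
      ↔
    (∀ π1 π2 : Fin X → ℝ,
        ((∀ i, 0 ≤ π1 i) ∧ ∑ i, π1 i = 1) →
        ((∀ i, 0 ≤ π2 i) ∧ ∑ i, π2 i = 1) →
        (∀ i j : Fin X, i < j → π1 i * π2 j ≤ π2 i * π1 j) →
        (∀ i j : Fin X, i < j →
          (∑ m, P m i * π1 m) * (∑ m, P m j * π2 m)
            ≤ (∑ m, P m i * π2 m) * (∑ m, P m j * π1 m))) := by
  constructor
  · intro hTP2 π1 π2 h1 h2 hmlr i j hij
    set g : Fin X → Fin X → ℝ := fun m n =>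
      P m i * P n j * (π2 m * π1 n - π1 m * π2 n) with hg
    have key : ∀ m n : Fin X, 0 ≤ g m n + g n m := by
      intro m n
      rcases lt_trichotomy m n with h | h | h
      · have hA : 0 ≤ P m i * P n j - P n i * P m j := by
          have := hTP2 m n i j h hij
          linarith
        have hB : 0 ≤ π2 m * π1 n - π1 m * π2 n := by
          have := hmlr m n h
          linarith
        have : 0 ≤ (P m i * P n j - P n i * P m j) * (π2 m * π1 n - π1 m * π2 n) :=
          mul_nonneg hA hB
        simp only [hg]
        nlinarith
      · have hz : g m n + g n m = 0 := by subst h; simp only [hg]; ring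
        linarith
      · have hA : 0 ≤ P n i * P m j - P m i * P n j := by
          have := hTP2 n m i j h hij
          linarith
        have hB : 0 ≤ π2 n * π1 m - π1 n * π2 m := by
          have := hmlr n m h
          linarith
        have : 0 ≤ (P n i * P m j - P m i * P n j) * (π2 n * π1 m - π1 n * π2 m) :=
          mul_nonneg hA hB
        simp only [hg]
        nlinarith
    have hsum : 0 ≤ ∑ m, ∑ n, (g m n + g n m) :=
      Finset.sum_nonneg fun m _ => Finset.sum_nonneg fun n _ => key m n
    have hsplit : ∑ m, ∑ n, (g m n + g n m) = 2 * ∑ m, ∑ n, g m n := by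
      simp only [Finset.sum_add_distrib]
      have hc : ∑ m, ∑ n, g n m = ∑ m, ∑ n, g m n :=
        Finset.sum_comm (f := fun m n => g n m)
      rw [hc]; ring
    have hS : 0 ≤ ∑ m, ∑ n, g m n := by linarith [hsplit ▸ hsum]
    have hEq : ∑ m, ∑ n, g m n =
        (∑ m, P m i * π2 m) * (∑ m, P m j * π1 m)
          - (∑ m, P m i * π1 m) * (∑ m, P m j * π2 m) := by
      rw [Finset.sum_mul_sum, Finset.sum_mul_sum, ← Finset.sum_sub_distrib]
      apply Finset.sum_congr rfl
      intro m _
      rw [← Finset.sum_sub_distrib]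
      apply Finset.sum_congr rfl
      intro n _
      simp only [hg]; ring
    linarith [hEq ▸ hS]
  · intro h i1 i2 j1 j2 hi hj
    have hmlr : ∀ i j : Fin X, i < j →
        (fun k => if k = i2 then (1:ℝ) else 0) i * (fun k => if k = i1 then (1:ℝ) else 0) j
          ≤ (fun k => if k = i1 then (1:ℝ) else 0) i * (fun k => if k = i2 then (1:ℝ) else 0) j := by
      intro i j hij
      dsimp only
      split_ifs <;> norm_num <;>
        (subst_vars;
         first
          | exact absurd hij (asymm hi)
          | exact absurd hi (lt_irrefl _)
          | exact absurd hij (lt_irrefl _))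
    have := h (fun k => if k = i2 then (1:ℝ) else 0) (fun k => if k = i1 then (1:ℝ) else 0)
      ⟨fun i => by split <;> norm_num, by simp⟩
      ⟨fun i => by split <;> norm_num, by simp⟩
      hmlr j1 j2 hj
    simp only [mul_ite, mul_one, mul_zero, Finset.sum_ite_eq', Finset.mem_univ, if_true] at this
    linarith
end

section
/- Let P be an X×X stochastic matrix and B an X×Y stochastic matrix, and assume both P and B are TP2. For a probability vector π on {1,…,X} define σ(π,y) = Σ_{j=1}^X (P'π)(j) B_{jy}, so that σ(π,·) is a probability vector on {1,…,Y}. If π1 MLR-dominates π2, then σ(π1,·) first-order stochastically dominates σ(π2,·): Σ_{y=ȳ}^Y σ(π1,y) ≥ Σ_{y=ȳ}^Y σ(π2,y) for every ȳ. -/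
open Finset

/-- MLR dominance implies FOSD (tail sums). `a` dominates `b`. -/
lemma mlr_fosd_aux (n : ℕ) (a b : Fin n → ℝ)
    (ha : ∀ i, 0 ≤ a i) (hb : ∀ i, 0 ≤ b i)
    (hsa : ∑ i, a i = 1) (hsb : ∑ i, b i = 1)
    (h : ∀ i j : Fin n, i < j → a i * b j ≤ b i * a j) (k : Fin n) :
    ∑ i ∈ univ.filter (fun i => k ≤ i), b i ≤ ∑ i ∈ univ.filter (fun i => k ≤ i), a i := by
  set S := univ.filter (fun i : Fin n => k ≤ i) with hS
  have hcross : (∑ i ∈ univ.filter (fun i : Fin n => ¬ k ≤ i), a i) * (∑ j ∈ S, b j)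
      ≤ (∑ i ∈ univ.filter (fun i : Fin n => ¬ k ≤ i), b i) * (∑ j ∈ S, a j) := by
    rw [Finset.sum_mul_sum, Finset.sum_mul_sum]
    apply Finset.sum_le_sum
    intro i hi
    apply Finset.sum_le_sum
    intro j hj
    simp only [hS, mem_filter, mem_univ, true_and] at hi hj
    exact h i j (lt_of_lt_of_le (lt_of_not_ge hi) hj)
  have hacompl : ∑ i ∈ univ.filter (fun i : Fin n => ¬ k ≤ i), a i = 1 - ∑ i ∈ S, a i := by
    have := Finset.sum_filter_add_sum_filter_not univ (fun i : Fin n => k ≤ i) a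
    rw [hsa] at this; linarith [this]
  have hbcompl : ∑ i ∈ univ.filter (fun i : Fin n => ¬ k ≤ i), b i = 1 - ∑ i ∈ S, b i := by
    have := Finset.sum_filter_add_sum_filter_not univ (fun i : Fin n => k ≤ i) b
    rw [hsb] at this; linarith [this]
  rw [hacompl, hbcompl] at hcross
  nlinarith [hcross]

/-- Summation by parts consequence: nonnegative pairing of monotone `f` with `c` having
zero total sum and nonnegative tail sums. -/
lemma fosd_exp_aux (n : ℕ) (c f : ℕ → ℝ)
    (hsum : ∑ i ∈ range n, c i = 0)
    (htail : ∀ k, 0 ≤ ∑ i ∈ Finset.Ico k n, c i)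
    (hf : ∀ i, i + 1 < n → f i ≤ f (i + 1)) :
    0 ≤ ∑ i ∈ range n, f i * c i := by
  have hby := Finset.sum_range_by_parts f c n
  simp only [smul_eq_mul] at hby
  rw [hby, hsum, mul_zero, zero_sub, ← Finset.sum_neg_distrib]
  apply Finset.sum_nonneg
  intro i hi
  rw [mem_range] at hi
  have hin : i + 1 ≤ n := by omega
  have hpart : ∑ j ∈ range (i + 1), c j + ∑ j ∈ Finset.Ico (i + 1) n, c j = ∑ j ∈ range n, c j := by
    simp only [range_eq_Ico]
    exact Finset.sum_Ico_consecutive _ (Nat.zero_le _) hin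
  have h1 : ∑ j ∈ range (i + 1), c j ≤ 0 := by
    have := htail (i + 1); rw [hsum] at hpart; linarith
  have h2 : f i ≤ f (i + 1) := hf i (by omega)
  nlinarith

/-- TP2 matrix multiplication preserves MLR ordering. -/
lemma tp2_mlr_aux (X : ℕ) (P : Matrix (Fin X) (Fin X) ℝ)
    (hPnonneg : ∀ i j, 0 ≤ P i j)
    (hPTP2 : ∀ i1 i2 j1 j2 : Fin X, i1 < i2 → j1 < j2 →
        P i1 j2 * P i2 j1 ≤ P i1 j1 * P i2 j2)
    (π1 π2 : Fin X → ℝ)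
    (hmlr : ∀ i j : Fin X, i < j → π1 i * π2 j ≤ π2 i * π1 j)
    (j j' : Fin X) (hjj : j < j') :
    (∑ m, P m j * π1 m) * (∑ n, P n j' * π2 n)
      ≤ (∑ m, P m j * π2 m) * (∑ n, P n j' * π1 n) := by
  set D : Fin X → Fin X → ℝ := fun m n =>
    P m j * π2 m * (P n j' * π1 n) - P m j * π1 m * (P n j' * π2 n) with hD
  have expand : (∑ m, P m j * π2 m) * (∑ n, P n j' * π1 n)
      - (∑ m, P m j * π1 m) * (∑ n, P n j' * π2 n) = ∑ m, ∑ n, D m n := by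
    rw [Finset.sum_mul_sum, Finset.sum_mul_sum, ← Finset.sum_sub_distrib]
    exact Finset.sum_congr rfl fun m _ => by rw [← Finset.sum_sub_distrib]
  have key : ∀ m n : Fin X, 0 ≤ D m n + D n m := by
    intro m n
    rcases lt_trichotomy m n with h | h | h
    · have h1 := hPTP2 m n j j' h hjj
      have h2 := hmlr m n h
      simp only [hD]
      nlinarith [hPnonneg m j, hPnonneg n j', hPnonneg n j, hPnonneg m j']
    · subst h
      have : D m m = 0 := by simp only [hD]; ring
      rw [this]; norm_num
    · have h1 := hPTP2 n m j j' h hjj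
      have h2 := hmlr n m h
      simp only [hD]
      nlinarith [hPnonneg n j, hPnonneg m j', hPnonneg m j, hPnonneg n j']
  have h1 : ∑ m, ∑ n, D n m = ∑ m, ∑ n, D m n := Finset.sum_comm
  have hdouble : ∑ m, ∑ n, (D m n + D n m) = (∑ m, ∑ n, D m n) + (∑ m, ∑ n, D m n) := by
    simp only [Finset.sum_add_distrib]
    rw [h1]
  have hpos : 0 ≤ (∑ m, ∑ n, D m n) + (∑ m, ∑ n, D m n) := by
    rw [← hdouble]
    exact Finset.sum_nonneg fun m _ => Finset.sum_nonneg fun n _ => key m n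
  nlinarith [expand, hpos]

/-- Bridge between `Fin` filter tail sums and `ℕ` interval sums. -/
lemma tail_bridge (n : ℕ) (k : Fin n) (f : ℕ → ℝ) :
    ∑ i ∈ univ.filter (fun i : Fin n => k ≤ i), f i.val = ∑ i ∈ Finset.Ico (k : ℕ) n, f i := by
  rw [Finset.sum_filter]
  simp only [Fin.le_def]
  rw [Fin.sum_univ_eq_sum_range (fun i => if (k : ℕ) ≤ i then f i else 0)]
  rw [← Finset.sum_filter]
  congr 1
  ext i
  simp only [Finset.mem_filter, Finset.mem_range, Finset.mem_Ico]
  tauto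

/-- **Monotonicity of the HMM filter normalization measure.** If the transition matrix
`P` and the observation matrix `B` are TP2 stochastic matrices and `π1` MLR-dominates
`π2`, then `σ(π1,·)` first-order stochastically dominates `σ(π2,·)`, where
`σ(π,y) = Σ_j (P'π)(j) B_{jy}`. -/
theorem hmm_normalization_fosd
    (X Y : ℕ)
    (P : Matrix (Fin X) (Fin X) ℝ)
    (hPnonneg : ∀ i j, 0 ≤ P i j) (hProwsum : ∀ i, ∑ j, P i j = 1)
    (hPTP2 : ∀ i1 i2 j1 j2 : Fin X, i1 < i2 → j1 < j2 →
        P i1 j2 * P i2 j1 ≤ P i1 j1 * P i2 j2)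
    (B : Matrix (Fin X) (Fin Y) ℝ)
    (hBnonneg : ∀ i y, 0 ≤ B i y) (hBrowsum : ∀ i, ∑ y, B i y = 1)
    (hBTP2 : ∀ i1 i2 : Fin X, ∀ y1 y2 : Fin Y, i1 < i2 → y1 < y2 →
        B i1 y2 * B i2 y1 ≤ B i1 y1 * B i2 y2)
    (π1 π2 : Fin X → ℝ)
    (h1nonneg : ∀ i, 0 ≤ π1 i) (h1sum : ∑ i, π1 i = 1)
    (h2nonneg : ∀ i, 0 ≤ π2 i) (h2sum : ∑ i, π2 i = 1)
    (hmlr : ∀ i j : Fin X, i < j → π1 i * π2 j ≤ π2 i * π1 j) :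
    ∀ ybar : Fin Y,
      ∑ y ∈ univ.filter (fun y => ybar ≤ y), (∑ j, (∑ m, P m j * π2 m) * B j y)
        ≤ ∑ y ∈ univ.filter (fun y => ybar ≤ y), (∑ j, (∑ m, P m j * π1 m) * B j y) := by
  intro ybar
  set τ1 : Fin X → ℝ := fun j => ∑ m, P m j * π1 m with hτ1
  set τ2 : Fin X → ℝ := fun j => ∑ m, P m j * π2 m with hτ2
  -- τ's are nonnegative probability vectors
  have hτ1nn : ∀ j, 0 ≤ τ1 j := fun j =>
    Finset.sum_nonneg fun m _ => mul_nonneg (hPnonneg m j) (h1nonneg m)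
  have hτ2nn : ∀ j, 0 ≤ τ2 j := fun j =>
    Finset.sum_nonneg fun m _ => mul_nonneg (hPnonneg m j) (h2nonneg m)
  have hτ1sum : ∑ j, τ1 j = 1 := by
    simp only [hτ1]
    rw [Finset.sum_comm]
    simp_rw [← Finset.sum_mul, hProwsum, one_mul]
    exact h1sum
  have hτ2sum : ∑ j, τ2 j = 1 := by
    simp only [hτ2]
    rw [Finset.sum_comm]
    simp_rw [← Finset.sum_mul, hProwsum, one_mul]
    exact h2sum
  -- τ1 MLR-dominates τ2
  have hmlrτ : ∀ j j' : Fin X, j < j' → τ1 j * τ2 j' ≤ τ2 j * τ1 j' := fun j j' hjj =>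
    tp2_mlr_aux X P hPnonneg hPTP2 π1 π2 hmlr j j' hjj
  -- hence τ1 FOSD τ2
  have hfosdτ : ∀ k : Fin X,
      ∑ i ∈ univ.filter (fun i => k ≤ i), τ2 i ≤ ∑ i ∈ univ.filter (fun i => k ≤ i), τ1 i :=
    mlr_fosd_aux X τ1 τ2 hτ1nn hτ2nn hτ1sum hτ2sum hmlrτ
  -- the tail observation sums are monotone in the state
  set g : Fin X → ℝ := fun j => ∑ y ∈ univ.filter (fun y => ybar ≤ y), B j y with hg
  have hgmono : ∀ j j' : Fin X, j < j' → g j ≤ g j' := by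
    intro j j' hjj
    exact mlr_fosd_aux Y (B j') (B j) (hBnonneg j') (hBnonneg j) (hBrowsum j') (hBrowsum j)
      (fun y1 y2 hy => by
        have := hBTP2 j j' y1 y2 hjj hy
        nlinarith [this]) ybar
  -- rewrite both sides as expectations of g
  have e1 : ∑ y ∈ univ.filter (fun y => ybar ≤ y), (∑ j, τ1 j * B j y) = ∑ j, τ1 j * g j := by
    rw [Finset.sum_comm]
    exact Finset.sum_congr rfl fun j _ => (Finset.mul_sum _ _ _).symm
  have e2 : ∑ y ∈ univ.filter (fun y => ybar ≤ y), (∑ j, τ2 j * B j y) = ∑ j, τ2 j * g j := by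
    rw [Finset.sum_comm]
    exact Finset.sum_congr rfl fun j _ => (Finset.mul_sum _ _ _).symm
  rw [e1, e2]
  -- conclude by summation by parts over ℕ
  set c : ℕ → ℝ := fun i => if h : i < X then τ1 ⟨i, h⟩ - τ2 ⟨i, h⟩ else 0 with hc
  set F : ℕ → ℝ := fun i => if h : i < X then g ⟨i, h⟩ else 0 with hF
  have hcfin : ∀ i : Fin X, c i.val = τ1 i - τ2 i := by
    intro i; simp [hc, i.isLt]
  have hFfin : ∀ i : Fin X, F i.val = g i := by
    intro i; simp [hF, i.isLt]
  have hsum : ∑ i ∈ range X, c i = 0 := by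
    rw [← Fin.sum_univ_eq_sum_range]
    simp only [hcfin]
    rw [Finset.sum_sub_distrib, hτ1sum, hτ2sum]
    ring
  have htail : ∀ k, 0 ≤ ∑ i ∈ Finset.Ico k X, c i := by
    intro k
    by_cases hk : k < X
    · rw [← tail_bridge X ⟨k, hk⟩ c]
      simp only [hcfin]
      rw [Finset.sum_sub_distrib]
      have := hfosdτ ⟨k, hk⟩
      linarith
    · rw [Finset.Ico_eq_empty (by omega)]
      simp
  have hfmono : ∀ i, i + 1 < X → F i ≤ F (i + 1) := by
    intro i hi
    have hi' : i < X := by omega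
    rw [show F i = g ⟨i, hi'⟩ from by simp [hF, hi'],
        show F (i + 1) = g ⟨i + 1, hi⟩ from by simp [hF, hi]]
    exact hgmono _ _ (by simp [Fin.lt_def])
  have key := fosd_exp_aux X c F hsum htail hfmono
  rw [← Fin.sum_univ_eq_sum_range (fun i => F i * c i)] at key
  simp only [hcfin, hFfin] at key
  have expand : ∑ i : Fin X, g i * (τ1 i - τ2 i) = ∑ j, τ1 j * g j - ∑ j, τ2 j * g j := by
    rw [← Finset.sum_sub_distrib]
    exact Finset.sum_congr rfl fun i _ => by ring
  rw [expand] at key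
  linarith
end

section
/- Let B be an X×Y matrix with nonnegative entries. Then the following are equivalent: (a) B is TP2; (b) for every X×X stochastic matrix P, every probability vector π on {1,…,X}, and all observations ȳ < y in {1,…,Y}, the unnormalized posterior vectors q_y(i) = B_{iy}(P'π)(i) and q_ȳ(i) = B_{iȳ}(P'π)(i) satisfy the MLR inequality q_y(i) q_ȳ(j) ≤ q_ȳ(i) q_y(j) for all i < j (i.e. the HMM filter update T(π,y) MLR-dominates T(π,ȳ)). -/
/-- **The HMM filter is MLR increasing in the observation iff `B` is TP2.** For an
`X×Y` nonnegative matrix `B`: `B` is TP2 iff for every stochastic matrix `P`, every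
probability vector `π` and observations `ȳ < y`, the unnormalized posteriors
`q_y(i) = B_{iy}(P'π)(i)` and `q_ȳ(i) = B_{iȳ}(P'π)(i)` satisfy
`q_y(i) q_ȳ(j) ≤ q_ȳ(i) q_y(j)` for all `i < j`. -/
theorem tp2_iff_filter_mlr_increasing_in_observation
    (X Y : ℕ)
    (B : Matrix (Fin X) (Fin Y) ℝ)
    (hBnonneg : ∀ i y, 0 ≤ B i y) :
    (∀ i1 i2 : Fin X, ∀ y1 y2 : Fin Y, i1 < i2 → y1 < y2 →
        B i1 y2 * B i2 y1 ≤ B i1 y1 * B i2 y2)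
      ↔
    (∀ P : Matrix (Fin X) (Fin X) ℝ,
        ((∀ i j, 0 ≤ P i j) ∧ ∀ i, ∑ j, P i j = 1) →
        ∀ π : Fin X → ℝ, ((∀ i, 0 ≤ π i) ∧ ∑ i, π i = 1) →
        ∀ ybar y : Fin Y, ybar < y →
        ∀ i j : Fin X, i < j →
          (B i y * (∑ m, P m i * π m)) * (B j ybar * (∑ m, P m j * π m))
            ≤ (B i ybar * (∑ m, P m i * π m)) * (B j y * (∑ m, P m j * π m))) := by
  constructor
  · intro h P hP π hπ ybar y hy i j hij
    have key := h i j ybar y hij hy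
    have hSi : 0 ≤ ∑ m, P m i * π m :=
      Finset.sum_nonneg fun m _ => mul_nonneg (hP.1 m i) (hπ.1 m)
    have hSj : 0 ≤ ∑ m, P m j * π m :=
      Finset.sum_nonneg fun m _ => mul_nonneg (hP.1 m j) (hπ.1 m)
    nlinarith [mul_le_mul_of_nonneg_right key (mul_nonneg hSi hSj)]
  · intro h i1 i2 y1 y2 hi hy
    have hX : 0 < X := i1.pos
    have hXpos : (0:ℝ) < (X:ℝ) := by exact_mod_cast hX
    set c : ℝ := 1 / X with hc
    have hcpos : 0 < c := by positivity
    have hsum1 : ∀ i : Fin X, ∑ _j : Fin X, c = 1 := by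
      intro i
      simp [Finset.sum_const, hc]
      field_simp
    have := h (fun _ _ => c) ⟨fun _ _ => le_of_lt hcpos, fun i => hsum1 i⟩
        (fun _ => c) ⟨fun _ => le_of_lt hcpos, hsum1 i1⟩ y1 y2 hy i1 i2 hi
    have hS : (∑ m : Fin X, c * c) = c * c * X := by
      simp [Finset.sum_const, mul_comm]
    rw [hS] at this
    have hpos : 0 < c * c * (X:ℝ) := by positivity
    have := le_of_mul_le_mul_right (by nlinarith [this] : (B i1 y2 * B i2 y1) * ((c*c*X)*(c*c*X)) ≤ (B i1 y1 * B i2 y2) * ((c*c*X)*(c*c*X))) (by positivity)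
    exact this
end

section
/- Let Π(X) be the belief simplex, let Q1(π) = c·π be a linear function on Π(X) for some c ∈ ℝ^X, let Q2 : Π(X) → ℝ, and suppose the function V(π) = min(Q1(π), Q2(π)) is concave on Π(X). Then the stopping set R1 = {π ∈ Π(X) : Q1(π) ≤ Q2(π)} = {π ∈ Π(X) : V(π) = Q1(π)} is a convex subset of Π(X). -/
/-- **Convexity of the stopping set of a stopping-time POMDP.** If the stopping cost
`Q1(π) = c·π` is linear, and the value function `V = min(Q1, Q2)` is concave on the
belief simplex, then the stopping set `R1 = {π : Q1(π) ≤ Q2(π)}` is convex. -/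
theorem stopping_set_convex
    (X : ℕ) (c : Fin X → ℝ)
    (Q2 : (Fin X → ℝ) → ℝ)
    (hconcave :
      ConcaveOn ℝ (stdSimplex ℝ (Fin X)) (fun π => min (∑ i, c i * π i) (Q2 π))) :
    Convex ℝ {π : Fin X → ℝ | π ∈ stdSimplex ℝ (Fin X) ∧ ∑ i, c i * π i ≤ Q2 π} := by
  intro p hp q hq a b ha hb hab
  have hpS := hp.1; have hqS := hq.1
  have hmem : a • p + b • q ∈ stdSimplex ℝ (Fin X) :=
    (convex_stdSimplex ℝ (Fin X)) hpS hqS ha hb hab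
  refine ⟨hmem, ?_⟩
  have hV := hconcave.2 hpS hqS ha hb hab
  have hp1 : min (∑ i, c i * p i) (Q2 p) = ∑ i, c i * p i := min_eq_left hp.2
  have hq1 : min (∑ i, c i * q i) (Q2 q) = ∑ i, c i * q i := min_eq_left hq.2
  simp only [hp1, hq1] at hV
  have hlin : ∑ i, c i * (a • p + b • q) i
      = a * ∑ i, c i * p i + b * ∑ i, c i * q i := by
    simp only [Pi.add_apply, Pi.smul_apply, smul_eq_mul, mul_add,
      Finset.sum_add_distrib, Finset.mul_sum]
    ring_nf
    congr 1 <;> exact Finset.sum_congr rfl fun i _ => by ring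
  have := le_trans hV (min_le_right _ _)
  calc ∑ i, c i * (a • p + b • q) i
      = a * ∑ i, c i * p i + b * ∑ i, c i * q i := hlin
    _ ≤ Q2 (a • p + b • q) := by
        simpa [smul_eq_mul] using this
end

section
/- Consider a POMDP with states {1,…,X}, actions {1,…,U}, finite observation set {1,…,Y}, discount factor ρ ∈ [0,1), stochastic transition matrices P(u), observation matrices B(u) (X×Y, strictly positive entries, rows summing to 1), and instantaneous costs C(π,u). For π ∈ Π(X) define σ(π,y,u) = Σ_j (P(u)'π)(j) B_{jy}(u) and T(π,y,u)(i) = B_{iy}(u)(P(u)'π)(i)/σ(π,y,u). Define value iteration: V_0 ≡ 0 and V_n(π) = min_u [ C(π,u) + ρ Σ_{y=1}^Y V_{n−1}(T(π,y,u)) σ(π,y,u) ]. Assume: (C) for each u, C(·,u) is decreasing with respect to first-order stochastic dominance (π1 ≥_s π2 implies C(π1,u) ≤ C(π2,u)); (F1) each B(u) is TP2; (F2) each P(u) is TP2. Then for every n, V_n is MLR decreasing: π1 ≥_r π2 implies V_n(π1) ≤ V_n(π2). -/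
open Finset


private lemma swap_sum (n : ℕ) (F : ℕ → ℕ → ℝ) :
    ∑ i ∈ range n, ∑ z ∈ range i, F z i = ∑ z ∈ range n, ∑ i ∈ Ico (z + 1) n, F z i := by
  have h1 : ∑ i ∈ range n, ∑ z ∈ range i, F z i
      = ∑ i ∈ range n, ∑ z ∈ range n, if z < i then F z i else 0 := by
    refine Finset.sum_congr rfl fun i hi => ?_
    rw [← Finset.sum_filter]
    congr 1
    ext z
    simp only [mem_filter, mem_range]
    have := mem_range.mp hi
    omega
  rw [h1, Finset.sum_comm]
  refine Finset.sum_congr rfl fun z _ => ?_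
  rw [← Finset.sum_filter]
  congr 1
  ext i
  simp only [mem_filter, mem_range, mem_Ico]
  omega

private lemma abel_nonneg (n : ℕ) (g μ : ℕ → ℝ)
    (hg : ∀ k, g k ≤ g (k + 1))
    (htail : ∀ j, 0 ≤ ∑ i ∈ Ico j n, μ i)
    (htot : ∑ i ∈ range n, μ i = 0) :
    0 ≤ ∑ i ∈ range n, g i * μ i := by
  have h1 : ∑ i ∈ range n, g i * μ i
      = g 0 * ∑ i ∈ range n, μ i + ∑ i ∈ range n, ∑ z ∈ range i, (g (z + 1) - g z) * μ i := by
    rw [Finset.mul_sum, ← Finset.sum_add_distrib]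
    refine Finset.sum_congr rfl fun i _ => ?_
    rw [← Finset.sum_mul, Finset.sum_range_sub g i]
    ring
  rw [h1, htot, mul_zero, zero_add, swap_sum]
  refine Finset.sum_nonneg fun z _ => ?_
  rw [← Finset.mul_sum]
  exact mul_nonneg (sub_nonneg.mpr (hg z)) (htail (z + 1))

private lemma expct_fin (n : ℕ) (g μ1 μ2 : Fin n → ℝ)
    (hg : ∀ i j : Fin n, i ≤ j → g i ≤ g j)
    (htail : ∀ j : Fin n, ∑ i ∈ univ.filter (fun i => j ≤ i), μ2 i
        ≤ ∑ i ∈ univ.filter (fun i => j ≤ i), μ1 i)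
    (htot : ∑ i, μ1 i = ∑ i, μ2 i) :
    ∑ i, g i * μ2 i ≤ ∑ i, g i * μ1 i := by
  cases n with
  | zero => simp
  | succ m =>
    set G : ℕ → ℝ := fun k => g ⟨min k m, by omega⟩ with hG
    set D : ℕ → ℝ := fun k => if h : k < m + 1 then μ1 ⟨k, h⟩ - μ2 ⟨k, h⟩ else 0 with hD
    have key : ∀ j : Fin (m + 1), ∑ i ∈ Ico j.val (m + 1), D i
        = ∑ i ∈ univ.filter (fun i => j ≤ i), (μ1 i - μ2 i) := by
      intro j
      have hIco : Ico j.val (m + 1) = (range (m + 1)).filter (fun i => j.val ≤ i) := by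
        ext i; simp only [mem_Ico, mem_filter, mem_range]; omega
      rw [hIco, Finset.sum_filter,
        ← Fin.sum_univ_eq_sum_range (fun k => if j.val ≤ k then D k else 0) (m + 1),
        Finset.sum_filter]
      refine Finset.sum_congr rfl fun i _ => ?_
      by_cases h : j ≤ i
      · rw [if_pos h, if_pos (Fin.le_def.mp h)]
        simp only [hD, dif_pos i.isLt, Fin.eta]
      · rw [if_neg h, if_neg (fun hc => h (Fin.le_def.mpr hc))]
    have hDfin : ∀ i : Fin (m + 1), D i.val = μ1 i - μ2 i := by
      intro i; simp only [hD, dif_pos i.isLt, Fin.eta]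
    have habel : 0 ≤ ∑ i ∈ range (m + 1), G i * D i := by
      apply abel_nonneg
      · intro k
        apply hg
        simp only [Fin.mk_le_mk]
        omega
      · intro j
        by_cases hj : j < m + 1
        · rw [show j = (⟨j, hj⟩ : Fin (m + 1)).val from rfl, key ⟨j, hj⟩,
            Finset.sum_sub_distrib]
          have := htail ⟨j, hj⟩
          linarith
        · rw [Finset.Ico_eq_empty (by omega)]
          simp
      · rw [← Fin.sum_univ_eq_sum_range D (m + 1)]
        have : ∀ i : Fin (m + 1), D i.val = μ1 i - μ2 i := hDfin
        calc ∑ i : Fin (m + 1), D i.val = ∑ i : Fin (m + 1), (μ1 i - μ2 i) :=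
              Finset.sum_congr rfl fun i _ => hDfin i
          _ = 0 := by rw [Finset.sum_sub_distrib, htot, sub_self]
    have htrans : ∑ i ∈ range (m + 1), G i * D i
        = ∑ i : Fin (m + 1), g i * (μ1 i - μ2 i) := by
      rw [← Fin.sum_univ_eq_sum_range (fun k => G k * D k) (m + 1)]
      refine Finset.sum_congr rfl fun i _ => ?_
      rw [hDfin i]
      congr 1
      simp only [hG]
      congr 1
      exact Fin.ext (by simp [Nat.min_eq_left (Nat.lt_succ_iff.mp i.isLt)])
    rw [htrans] at habel
    have : ∑ i : Fin (m + 1), g i * (μ1 i - μ2 i)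
        = ∑ i, g i * μ1 i - ∑ i, g i * μ2 i := by
      rw [← Finset.sum_sub_distrib]
      exact Finset.sum_congr rfl fun i _ => by ring
    linarith [this ▸ habel]

private lemma mlr_fosd (n : ℕ) (π1 π2 : Fin n → ℝ)
    (h1s : ∑ i, π1 i = 1) (h2s : ∑ i, π2 i = 1)
    (hm : ∀ i j : Fin n, i < j → π1 i * π2 j ≤ π2 i * π1 j)
    (j : Fin n) :
    ∑ i ∈ univ.filter (fun i => j ≤ i), π2 i ≤ ∑ i ∈ univ.filter (fun i => j ≤ i), π1 i := by
  set A := univ.filter (fun i : Fin n => j ≤ i) with hA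
  set Bc := univ.filter (fun i : Fin n => ¬ j ≤ i) with hBc
  have hsplit1 : ∑ i ∈ A, π1 i + ∑ i ∈ Bc, π1 i = 1 := by
    rw [hA, hBc, Finset.sum_filter_add_sum_filter_not]; exact h1s
  have hsplit2 : ∑ i ∈ A, π2 i + ∑ i ∈ Bc, π2 i = 1 := by
    rw [hA, hBc, Finset.sum_filter_add_sum_filter_not]; exact h2s
  have hcross : (∑ i ∈ Bc, π1 i) * (∑ k ∈ A, π2 k) ≤ (∑ i ∈ Bc, π2 i) * (∑ k ∈ A, π1 k) := by
    rw [Finset.sum_mul_sum, Finset.sum_mul_sum]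
    refine Finset.sum_le_sum fun i hi => Finset.sum_le_sum fun k hk => ?_
    have hi' : ¬ j ≤ i := (mem_filter.mp hi).2
    have hk' : j ≤ k := (mem_filter.mp hk).2
    exact hm i k (lt_of_lt_of_le (lt_of_not_ge hi') hk')
  have e1 : ∑ i ∈ Bc, π1 i = 1 - ∑ i ∈ A, π1 i := by linarith
  have e2 : ∑ i ∈ Bc, π2 i = 1 - ∑ i ∈ A, π2 i := by linarith
  rw [e1, e2] at hcross
  nlinarith [hcross]

private lemma mlr_comp (n : ℕ) (P : Fin n → Fin n → ℝ)
    (hTP2 : ∀ m1 m2 j1 j2 : Fin n, m1 < m2 → j1 < j2 → P m1 j2 * P m2 j1 ≤ P m1 j1 * P m2 j2)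
    (π1 π2 : Fin n → ℝ)
    (hm : ∀ i j : Fin n, i < j → π1 i * π2 j ≤ π2 i * π1 j)
    (i j : Fin n) (hij : i < j) :
    (∑ m, P m i * π1 m) * (∑ m, P m j * π2 m) ≤ (∑ m, P m i * π2 m) * (∑ m, P m j * π1 m) := by
  set s : Fin n → Fin n → ℝ := fun m k => P m i * P k j * (π2 m * π1 k - π1 m * π2 k) with hs
  have key : ∀ m k : Fin n, m < k → 0 ≤ s m k + s k m := by
    intro m k hmk
    have h1 : 0 ≤ π2 m * π1 k - π1 m * π2 k := sub_nonneg.mpr (hm m k hmk)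
    have h2 : 0 ≤ P m i * P k j - P m j * P k i := sub_nonneg.mpr (hTP2 m k i j hmk hij)
    have he : s m k + s k m
        = (π2 m * π1 k - π1 m * π2 k) * (P m i * P k j - P m j * P k i) := by
      simp only [hs]; ring
    rw [he]; exact mul_nonneg h1 h2
  have key2 : ∀ m k : Fin n, 0 ≤ s m k + s k m := by
    intro m k
    rcases lt_trichotomy m k with h | h | h
    · exact key m k h
    · subst h
      have : s m m = 0 := by simp only [hs]; ring
      rw [this]; norm_num
    · rw [add_comm]; exact key k m h
  have hsum : 0 ≤ ∑ m, ∑ k, s m k := by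
    have h2 : 0 ≤ ∑ m, ∑ k, (s m k + s k m) :=
      Finset.sum_nonneg fun m _ => Finset.sum_nonneg fun k _ => key2 m k
    have h3 : ∑ m, ∑ k, (s m k + s k m)
        = (∑ m, ∑ k, s m k) + (∑ m, ∑ k, s k m) := by
      rw [← Finset.sum_add_distrib]
      exact Finset.sum_congr rfl fun m _ => Finset.sum_add_distrib
    have h4 : ∑ m : Fin n, ∑ k : Fin n, s k m = ∑ m, ∑ k, s m k := Finset.sum_comm
    rw [h3, h4] at h2
    linarith
  have expand : (∑ m, P m i * π2 m) * (∑ m, P m j * π1 m)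
      - (∑ m, P m i * π1 m) * (∑ m, P m j * π2 m) = ∑ m, ∑ k, s m k := by
    rw [Finset.sum_mul_sum, Finset.sum_mul_sum, ← Finset.sum_sub_distrib]
    refine Finset.sum_congr rfl fun m _ => ?_
    rw [← Finset.sum_sub_distrib]
    refine Finset.sum_congr rfl fun k _ => ?_
    simp only [hs]; ring
  linarith

/-- **Monotone value function for POMDPs.** Under (C) costs decreasing w.r.t.
first-order stochastic dominance, (F1) TP2 observation matrices and (F2) TP2
transition matrices, every value-iteration iterate `V_n` is MLR decreasing on the
belief simplex. -/
theorem pomdp_monotone_value_function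
    (X U Y : ℕ) (hU : 0 < U)
    (ρ : ℝ) (hρ0 : 0 ≤ ρ) (hρ1 : ρ < 1)
    (P : Fin U → Matrix (Fin X) (Fin X) ℝ)
    (hPstoch : ∀ u, (∀ i j, 0 ≤ P u i j) ∧ ∀ i, ∑ j, P u i j = 1)
    (B : Fin U → Matrix (Fin X) (Fin Y) ℝ)
    (hBpos : ∀ u i y, 0 < B u i y) (hBrow : ∀ u i, ∑ y, B u i y = 1)
    (C : (Fin X → ℝ) → Fin U → ℝ)
    -- (C): instantaneous cost decreasing w.r.t. first-order stochastic dominance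
    (hC : ∀ u : Fin U, ∀ π1 π2 : Fin X → ℝ,
        π1 ∈ stdSimplex ℝ (Fin X) → π2 ∈ stdSimplex ℝ (Fin X) →
        (∀ j : Fin X,
          ∑ i ∈ univ.filter (fun i => j ≤ i), π2 i
            ≤ ∑ i ∈ univ.filter (fun i => j ≤ i), π1 i) →
        C π1 u ≤ C π2 u)
    -- (F1): each observation matrix B(u) is TP2
    (hBTP2 : ∀ u : Fin U, ∀ i1 i2 : Fin X, ∀ y1 y2 : Fin Y, i1 < i2 → y1 < y2 →
        B u i1 y2 * B u i2 y1 ≤ B u i1 y1 * B u i2 y2)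
    -- (F2): each transition matrix P(u) is TP2
    (hPTP2 : ∀ u : Fin U, ∀ i1 i2 j1 j2 : Fin X, i1 < i2 → j1 < j2 →
        P u i1 j2 * P u i2 j1 ≤ P u i1 j1 * P u i2 j2)
    (σ : (Fin X → ℝ) → Fin Y → Fin U → ℝ)
    (T : (Fin X → ℝ) → Fin Y → Fin U → Fin X → ℝ)
    (hσ : ∀ π y u, σ π y u = ∑ j, (∑ m, P u m j * π m) * B u j y)
    (hT : ∀ π y u i, T π y u i = B u i y * (∑ m, P u m i * π m) / σ π y u)
    -- value iteration
    (V : ℕ → (Fin X → ℝ) → ℝ)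
    (hV0 : ∀ π, V 0 π = 0)
    (hVrec : ∀ n : ℕ, ∀ π ∈ stdSimplex ℝ (Fin X),
        (∃ u : Fin U, V (n + 1) π = C π u + ρ * ∑ y, V n (T π y u) * σ π y u) ∧
        (∀ u : Fin U, V (n + 1) π ≤ C π u + ρ * ∑ y, V n (T π y u) * σ π y u)) :
    ∀ n : ℕ, ∀ π1 π2 : Fin X → ℝ,
      π1 ∈ stdSimplex ℝ (Fin X) → π2 ∈ stdSimplex ℝ (Fin X) →
      (∀ i j : Fin X, i < j → π1 i * π2 j ≤ π2 i * π1 j) →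
      V n π1 ≤ V n π2 := by
  intro n
  induction n with
  | zero => intro π1 π2 _ _ _; simp [hV0]
  | succ n ih =>
    intro π1 π2 h1 h2 hm
    obtain ⟨u, hu2⟩ := (hVrec n π2 h2).1
    have hle1 := (hVrec n π1 h1).2 u
    have hPnn : ∀ a b, 0 ≤ P u a b := (hPstoch u).1
    have hProw : ∀ a, ∑ b, P u a b = 1 := (hPstoch u).2
    -- facts about q π j := ∑ m, P u m j * π m
    have hq_nn : ∀ (π : Fin X → ℝ), (∀ i, 0 ≤ π i) → ∀ jj : Fin X, 0 ≤ ∑ m, P u m jj * π m :=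
      fun π hπ jj => Finset.sum_nonneg fun m _ => mul_nonneg (hPnn m jj) (hπ m)
    have hq_sum : ∀ (π : Fin X → ℝ), (∑ i, π i = 1) → ∑ jj, ∑ m, P u m jj * π m = 1 := by
      intro π hπ
      rw [Finset.sum_comm]
      calc ∑ m, ∑ jj, P u m jj * π m = ∑ m, (∑ jj, P u m jj) * π m := by
            exact Finset.sum_congr rfl fun m _ => (Finset.sum_mul _ _ _).symm
        _ = ∑ m, π m := Finset.sum_congr rfl fun m _ => by rw [hProw m, one_mul]
        _ = 1 := hπ
    have hσ_pos : ∀ (π : Fin X → ℝ), π ∈ stdSimplex ℝ (Fin X) → ∀ y, 0 < σ π y u := by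
      intro π hπ y
      rw [hσ]
      have hnn : ∀ jj : Fin X, 0 ≤ (∑ m, P u m jj * π m) * B u jj y :=
        fun jj => mul_nonneg (hq_nn π hπ.1 jj) (hBpos u jj y).le
      have hex : ∃ jj : Fin X, 0 < (∑ m, P u m jj * π m) * B u jj y := by
        by_contra hcon
        push_neg at hcon
        have hz : ∀ jj : Fin X, ∑ m, P u m jj * π m = 0 := by
          intro jj
          have hc := hcon jj
          have hb := hBpos u jj y
          nlinarith [hq_nn π hπ.1 jj]
        have hone := hq_sum π hπ.2
        simp [hz] at hone
      obtain ⟨jj, hjj⟩ := hex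
      exact Finset.sum_pos' (fun k _ => hnn k) ⟨jj, Finset.mem_univ _, hjj⟩
    have hT_mem : ∀ (π : Fin X → ℝ), π ∈ stdSimplex ℝ (Fin X) → ∀ y,
        T π y u ∈ stdSimplex ℝ (Fin X) := by
      intro π hπ y
      constructor
      · intro i
        rw [hT]
        exact div_nonneg (mul_nonneg (hBpos u i y).le (hq_nn π hπ.1 i)) (hσ_pos π hπ y).le
      · have e1 : ∑ i, T π y u i = (∑ i, B u i y * (∑ m, P u m i * π m)) / σ π y u := by
          rw [Finset.sum_div]; exact Finset.sum_congr rfl fun i _ => hT π y u i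
        have e2 : ∑ i, B u i y * (∑ m, P u m i * π m) = σ π y u := by
          rw [hσ]; exact Finset.sum_congr rfl fun i _ => mul_comm _ _
        rw [e1, e2, div_self (hσ_pos π hπ y).ne']
    -- MLR dominance of predicted beliefs
    have hqm : ∀ i jj : Fin X, i < jj →
        (∑ m, P u m i * π1 m) * (∑ m, P u m jj * π2 m)
          ≤ (∑ m, P u m i * π2 m) * (∑ m, P u m jj * π1 m) :=
      fun i jj hij => mlr_comp X (P u) (hPTP2 u) π1 π2 hm i jj hij
    -- T is MLR-monotone in π
    have hTm : ∀ y : Fin Y, ∀ i jj : Fin X, i < jj →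
        T π1 y u i * T π2 y u jj ≤ T π2 y u i * T π1 y u jj := by
      intro y i jj hij
      have hσ1 := hσ_pos π1 h1 y
      have hσ2 := hσ_pos π2 h2 y
      rw [hT, hT, hT, hT, div_mul_div_comm, div_mul_div_comm,
        div_le_div_iff₀ (by positivity) (by positivity)]
      have hcore := hqm i jj hij
      have hBB : (0:ℝ) ≤ B u i y * B u jj y :=
        mul_nonneg (hBpos u i y).le (hBpos u jj y).le
      have h5 := mul_le_mul_of_nonneg_left hcore hBB
      nlinarith [h5, mul_pos hσ1 hσ2]
    -- T is MLR-increasing in y (for π2)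
    have hTy : ∀ y1 y2 : Fin Y, y1 < y2 → ∀ i jj : Fin X, i < jj →
        T π2 y2 u i * T π2 y1 u jj ≤ T π2 y1 u i * T π2 y2 u jj := by
      intro y1 y2 hy i jj hij
      have hσ1 := hσ_pos π2 h2 y1
      have hσ2 := hσ_pos π2 h2 y2
      rw [hT, hT, hT, hT, div_mul_div_comm, div_mul_div_comm,
        div_le_div_iff₀ (by positivity) (by positivity)]
      have hcore := hBTP2 u i jj y1 y2 hij hy
      have hqq : (0:ℝ) ≤ (∑ m, P u m i * π2 m) * (∑ m, P u m jj * π2 m) :=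
        mul_nonneg (hq_nn π2 h2.1 i) (hq_nn π2 h2.1 jj)
      have h5 := mul_le_mul_of_nonneg_left hcore hqq
      nlinarith [h5, mul_pos hσ1 hσ2]
    -- MLR dominance of updated beliefs : V n comparisons via ih
    have hVT : ∀ y : Fin Y, V n (T π1 y u) ≤ V n (T π2 y u) :=
      fun y => ih (T π1 y u) (T π2 y u) (hT_mem π1 h1 y) (hT_mem π2 h2 y) (hTm y)
    have hf_dec : ∀ y1 y2 : Fin Y, y1 ≤ y2 → V n (T π2 y2 u) ≤ V n (T π2 y1 u) := by
      intro y1 y2 hy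
      rcases eq_or_lt_of_le hy with h | h
      · rw [h]
      · exact ih (T π2 y2 u) (T π2 y1 u) (hT_mem π2 h2 y2) (hT_mem π2 h2 y1) (hTy y1 y2 h)
    -- σ tail sums rewrite
    have hrwσ : ∀ (π : Fin X → ℝ) (S : Finset (Fin Y)),
        ∑ y ∈ S, σ π y u = ∑ jj, (∑ y ∈ S, B u jj y) * (∑ m, P u m jj * π m) := by
      intro π S
      calc ∑ y ∈ S, σ π y u = ∑ y ∈ S, ∑ jj, (∑ m, P u m jj * π m) * B u jj y :=
            Finset.sum_congr rfl fun y _ => hσ π y u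
        _ = ∑ jj, ∑ y ∈ S, (∑ m, P u m jj * π m) * B u jj y := Finset.sum_comm
        _ = ∑ jj, (∑ y ∈ S, B u jj y) * (∑ m, P u m jj * π m) := by
            refine Finset.sum_congr rfl fun jj _ => ?_
            rw [← Finset.mul_sum, mul_comm]
    -- σ(π1,·) first-order dominates σ(π2,·)
    have hσtail : ∀ y0 : Fin Y,
        ∑ y ∈ univ.filter (fun y => y0 ≤ y), σ π2 y u
          ≤ ∑ y ∈ univ.filter (fun y => y0 ≤ y), σ π1 y u := by
      intro y0
      rw [hrwσ π1 _, hrwσ π2 _]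
      apply expct_fin X (fun jj => ∑ y ∈ univ.filter (fun y => y0 ≤ y), B u jj y)
        (fun jj => ∑ m, P u m jj * π1 m) (fun jj => ∑ m, P u m jj * π2 m)
      · intro i jj hij
        rcases eq_or_lt_of_le hij with h | h
        · rw [h]
        · refine mlr_fosd Y (fun y => B u jj y) (fun y => B u i y)
            (hBrow u jj) (hBrow u i) (fun y1 y2 hy => ?_) y0
          have := hBTP2 u i jj y1 y2 h hy
          nlinarith [this]
      · intro jj
        exact mlr_fosd X (fun k => ∑ m, P u m k * π1 m) (fun k => ∑ m, P u m k * π2 m)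
          (hq_sum π1 h1.2) (hq_sum π2 h2.2) hqm jj
      · rw [hq_sum π1 h1.2, hq_sum π2 h2.2]
    have hσsum : ∀ (π : Fin X → ℝ), (∑ i, π i = 1) → ∑ y, σ π y u = 1 := by
      intro π hπ
      rw [hrwσ π univ]
      calc ∑ jj, (∑ y, B u jj y) * (∑ m, P u m jj * π m)
          = ∑ jj, ∑ m, P u m jj * π m := by
            refine Finset.sum_congr rfl fun jj _ => ?_
            rw [hBrow u jj, one_mul]
        _ = 1 := hq_sum π hπ
    -- step 1 : replace V n (T π1 ...) by V n (T π2 ...)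
    have hstep1 : ∑ y, V n (T π1 y u) * σ π1 y u ≤ ∑ y, V n (T π2 y u) * σ π1 y u :=
      Finset.sum_le_sum fun y _ =>
        mul_le_mul_of_nonneg_right (hVT y) (hσ_pos π1 h1 y).le
    -- step 2 : swap σ π1 for σ π2 using FOSD + decreasing integrand
    have hstep2 : ∑ y, V n (T π2 y u) * σ π1 y u ≤ ∑ y, V n (T π2 y u) * σ π2 y u := by
      have hexp := expct_fin Y (fun y => - V n (T π2 y u))
        (fun y => σ π1 y u) (fun y => σ π2 y u)
        (fun y1 y2 hy => neg_le_neg (hf_dec y1 y2 hy)) hσtail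
        (by rw [hσsum π1 h1.2, hσsum π2 h2.2])
      simp only [neg_mul] at hexp
      rw [Finset.sum_neg_distrib, Finset.sum_neg_distrib] at hexp
      linarith
    have hCineq : C π1 u ≤ C π2 u :=
      hC u π1 π2 h1 h2 (mlr_fosd X π1 π2 h1.2 h2.2 hm)
    calc V (n + 1) π1 ≤ C π1 u + ρ * ∑ y, V n (T π1 y u) * σ π1 y u := hle1
      _ ≤ C π2 u + ρ * ∑ y, V n (T π2 y u) * σ π2 y u :=
          add_le_add hCineq (mul_le_mul_of_nonneg_left (le_trans hstep1 hstep2) hρ0)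
      _ = V (n + 1) π2 := hu2.symm
end

section
/- Let P be an X×X stochastic matrix, B2 an X×Y2 matrix with strictly positive entries and rows summing to 1, R a Y2×Y1 matrix with strictly positive entries and rows summing to 1, and set B1 = B2 R (so B2 Blackwell-dominates B1). Let V : Π(X) → ℝ be concave. For u ∈ {1,2} and an observation y define σ_u(π,y) = Σ_i (P'π)(i) B_u(i,y) and T_u(π,y)(i) = B_u(i,y)(P'π)(i)/σ_u(π,y). Then for every π ∈ Π(X): Σ_{y1=1}^{Y1} V(T_1(π,y1)) σ_1(π,y1) ≥ Σ_{y2=1}^{Y2} V(T_2(π,y2)) σ_2(π,y2). In words, the expected value of a concave function of the updated belief is larger under the less informative (Blackwell-dominated) observation kernel. -/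
/-- **Blackwell dominance and concave value functions.** Let `B1 = B2 R` for a
stochastic matrix `R` (so `B2` Blackwell-dominates `B1`) and let `V` be concave on the
belief simplex. Then for every belief `π`, the expected value of `V` at the updated
belief is larger under the less informative kernel `B1` than under `B2`. -/
theorem blackwell_dominance_value_inequality
    (X Y1 Y2 : ℕ)
    (P : Matrix (Fin X) (Fin X) ℝ)
    (hPnonneg : ∀ i j, 0 ≤ P i j) (hProw : ∀ i, ∑ j, P i j = 1)
    (B2 : Matrix (Fin X) (Fin Y2) ℝ)
    (hB2pos : ∀ i y, 0 < B2 i y) (hB2row : ∀ i, ∑ y, B2 i y = 1)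
    (R : Matrix (Fin Y2) (Fin Y1) ℝ)
    (hRpos : ∀ y2 y1, 0 < R y2 y1) (hRrow : ∀ y2, ∑ y1, R y2 y1 = 1)
    (B1 : Matrix (Fin X) (Fin Y1) ℝ)
    (hB1 : ∀ i y1, B1 i y1 = ∑ y2, B2 i y2 * R y2 y1)
    (V : (Fin X → ℝ) → ℝ)
    (hV : ConcaveOn ℝ (stdSimplex ℝ (Fin X)) V)
    (σ1 : (Fin X → ℝ) → Fin Y1 → ℝ) (T1 : (Fin X → ℝ) → Fin Y1 → Fin X → ℝ)
    (σ2 : (Fin X → ℝ) → Fin Y2 → ℝ) (T2 : (Fin X → ℝ) → Fin Y2 → Fin X → ℝ)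
    (hσ1 : ∀ π y, σ1 π y = ∑ i, (∑ m, P m i * π m) * B1 i y)
    (hT1 : ∀ π y i, T1 π y i = B1 i y * (∑ m, P m i * π m) / σ1 π y)
    (hσ2 : ∀ π y, σ2 π y = ∑ i, (∑ m, P m i * π m) * B2 i y)
    (hT2 : ∀ π y i, T2 π y i = B2 i y * (∑ m, P m i * π m) / σ2 π y) :
    ∀ π ∈ stdSimplex ℝ (Fin X),
      ∑ y2, V (T2 π y2) * σ2 π y2 ≤ ∑ y1, V (T1 π y1) * σ1 π y1 := by
  intro π hπ
  set q : Fin X → ℝ := fun i => ∑ m, P m i * π m with hqdef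
  have hqnn : ∀ i, 0 ≤ q i := fun i =>
    Finset.sum_nonneg fun m _ => mul_nonneg (hPnonneg m i) (hπ.1 m)
  have hqsum : ∑ i, q i = 1 := by
    simp only [hqdef]
    rw [Finset.sum_comm]
    have : ∀ m : Fin X, ∑ i, P m i * π m = π m := by
      intro m; rw [← Finset.sum_mul, hProw, one_mul]
    simp only [this]
    exact hπ.2
  have hi0 : ∃ i, 0 < q i := by
    by_contra h
    push_neg at h
    have : ∑ i, q i = 0 := Finset.sum_eq_zero fun i _ => le_antisymm (h i) (hqnn i)
    linarith
  obtain ⟨i0, hi0⟩ := hi0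
  have hσ2pos : ∀ y, 0 < σ2 π y := by
    intro y
    rw [hσ2]
    exact Finset.sum_pos' (fun i _ => mul_nonneg (hqnn i) (hB2pos i y).le)
      ⟨i0, Finset.mem_univ i0, mul_pos hi0 (hB2pos i0 y)⟩
  have hY2 : Nonempty (Fin Y2) := by
    rcases Nat.eq_zero_or_pos Y2 with h | h
    · exfalso; have := hB2row i0; subst h; simp at this
    · exact ⟨⟨0, h⟩⟩
  have hσ1eq : ∀ y1, σ1 π y1 = ∑ y2, R y2 y1 * σ2 π y2 := by
    intro y1
    rw [hσ1]
    simp only [hB1, hσ2, Finset.mul_sum, Finset.sum_mul]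
    rw [Finset.sum_comm]
    exact Finset.sum_congr rfl fun y2 _ => Finset.sum_congr rfl fun i _ =>
      Finset.sum_congr rfl fun m _ => by ring
  have hσ1pos : ∀ y1, 0 < σ1 π y1 := by
    intro y1
    rw [hσ1eq]
    exact Finset.sum_pos (fun y2 _ => mul_pos (hRpos y2 y1) (hσ2pos y2))
      Finset.univ_nonempty
  have hT2mem : ∀ y, T2 π y ∈ stdSimplex ℝ (Fin X) := by
    intro y
    constructor
    · intro i
      rw [hT2]
      exact div_nonneg (mul_nonneg (hB2pos i y).le (hqnn i)) (hσ2pos y).le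
    · simp only [hT2]
      rw [← Finset.sum_div, div_eq_one_iff_eq (hσ2pos y).ne']
      rw [hσ2]
      exact Finset.sum_congr rfl fun i _ => by ring
  have hT1eq : ∀ y1, T1 π y1 =
      ∑ y2, (R y2 y1 * σ2 π y2 / σ1 π y1) • T2 π y2 := by
    intro y1
    funext i
    simp only [Finset.sum_apply, Pi.smul_apply, smul_eq_mul, hT1, hT2, hB1]
    rw [Finset.sum_mul, Finset.sum_div]
    refine Finset.sum_congr rfl fun y2 _ => ?_
    have h2 := (hσ2pos y2).ne'
    have h1 := (hσ1pos y1).ne'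
    field_simp
  -- Jensen per y1
  have key : ∀ y1, ∑ y2, R y2 y1 * σ2 π y2 * V (T2 π y2) ≤ V (T1 π y1) * σ1 π y1 := by
    intro y1
    have hw : ∀ y2 ∈ Finset.univ, 0 ≤ R y2 y1 * σ2 π y2 / σ1 π y1 := fun y2 _ =>
      div_nonneg (mul_nonneg (hRpos y2 y1).le (hσ2pos y2).le) (hσ1pos y1).le
    have hwsum : ∑ y2, R y2 y1 * σ2 π y2 / σ1 π y1 = 1 := by
      rw [← Finset.sum_div, ← hσ1eq, div_self (hσ1pos y1).ne']
    have hjensen := hV.le_map_sum hw hwsum (fun y2 _ => hT2mem y2)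
    rw [← hT1eq y1] at hjensen
    have : ∑ y2, (R y2 y1 * σ2 π y2 / σ1 π y1) • V (T2 π y2)
        = (∑ y2, R y2 y1 * σ2 π y2 * V (T2 π y2)) / σ1 π y1 := by
      rw [Finset.sum_div]
      exact Finset.sum_congr rfl fun y2 _ => by
        simp [smul_eq_mul]; ring
    rw [this] at hjensen
    rw [← div_le_iff₀ (hσ1pos y1)] at *
    exact hjensen
  calc ∑ y2, V (T2 π y2) * σ2 π y2
      = ∑ y2, (∑ y1, R y2 y1) * (σ2 π y2 * V (T2 π y2)) := by
        simp only [hRrow, one_mul]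
        exact Finset.sum_congr rfl fun y2 _ => by ring
    _ = ∑ y1, ∑ y2, R y2 y1 * σ2 π y2 * V (T2 π y2) := by
        simp only [Finset.sum_mul]
        rw [Finset.sum_comm]
        exact Finset.sum_congr rfl fun y1 _ => Finset.sum_congr rfl fun y2 _ => by ring
    _ ≤ ∑ y1, V (T1 π y1) * σ1 π y1 := Finset.sum_le_sum fun y1 _ => key y1
end

section
/- Consider a POMDP with states {1,…,X}, actions {1,…,U}, finite observation set {1,…,Y}, stochastic transition matrices P(u), observation matrices B(u) (X×Y, strictly positive entries, rows summing to 1), and cost vectors c_u ∈ ℝ^X. For π ∈ Π(X) write B_y(u) = diag(B_{1y}(u),…,B_{Xy}(u)), σ(π,y,u) = 1'B_y(u)P(u)'π > 0 and T(π,y,u) = B_y(u)P(u)'π / σ(π,y,u). Suppose J'(π) = min_{γ̄ ∈ Γ'} γ̄·π for a finite nonempty set Γ' ⊂ ℝ^X, and define the one-step Bellman backup J(π) = min_{u} [ c_u·π + Σ_{y=1}^Y J'(T(π,y,u)) σ(π,y,u) ]. Then J is piecewise linear and concave on Π(X); specifically, J(π) = min_{γ ∈ Γ} γ·π for every π ∈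 Π(X), where Γ = ∪_{u=1}^U ⊕_{y=1}^Y { c_u/Y + P(u)B_y(u)γ̄ : γ̄ ∈ Γ' } is the finite set obtained by taking, for each u, all cross-sums over y of the indicated vectors (⊕ denotes the cross-sum of sets: all sums picking one vector per y). -/
/-- **Sondik's piecewise linear concave backup.** If `J'(π) = min_{γ̄ ∈ Γ'} γ̄·π` on the
belief simplex and `J` is the one-step POMDP dynamic programming backup of `J'`, then
`J` is concave on the simplex and `J(π) = min_{γ ∈ Γ} γ·π`, where
`Γ = ∪_u ⊕_y { c_u/Y + P(u)B_y(u)γ̄ : γ̄ ∈ Γ' }`; equivalently `Γ` consists of all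
vectors `i ↦ Σ_y (c_u(i)/Y + Σ_j P(u)_{ij} B(u)_{jy} γ̄_y(j))` with `u` an action and
`γ̄_y ∈ Γ'` chosen for each observation `y`. -/
theorem sondik_pwlc_backup
    (X U Y : ℕ) (hU : 0 < U) (hY : 0 < Y)
    (P : Fin U → Matrix (Fin X) (Fin X) ℝ)
    (hPstoch : ∀ u, (∀ i j, 0 ≤ P u i j) ∧ ∀ i, ∑ j, P u i j = 1)
    (B : Fin U → Matrix (Fin X) (Fin Y) ℝ)
    (hBpos : ∀ u i y, 0 < B u i y) (hBrow : ∀ u i, ∑ y, B u i y = 1)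
    (c : Fin U → Fin X → ℝ)
    (Γ' : Finset (Fin X → ℝ)) (hΓ' : Γ'.Nonempty)
    -- J' is piecewise linear concave with gradient set Γ'
    (J' : (Fin X → ℝ) → ℝ)
    (hJ'min : ∀ π ∈ stdSimplex ℝ (Fin X), ∃ γ ∈ Γ', J' π = ∑ i, γ i * π i)
    (hJ'le : ∀ π ∈ stdSimplex ℝ (Fin X), ∀ γ ∈ Γ', J' π ≤ ∑ i, γ i * π i)
    (σ : (Fin X → ℝ) → Fin Y → Fin U → ℝ)
    (T : (Fin X → ℝ) → Fin Y → Fin U → Fin X → ℝ)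
    (hσ : ∀ π y u, σ π y u = ∑ j, (∑ m, P u m j * π m) * B u j y)
    (hT : ∀ π y u i, T π y u i = B u i y * (∑ m, P u m i * π m) / σ π y u)
    -- J is the one-step Bellman backup of J'
    (J : (Fin X → ℝ) → ℝ)
    (hJmin : ∀ π ∈ stdSimplex ℝ (Fin X),
        ∃ u : Fin U, J π = ∑ i, c u i * π i + ∑ y, J' (T π y u) * σ π y u)
    (hJle : ∀ π ∈ stdSimplex ℝ (Fin X),
        ∀ u : Fin U, J π ≤ ∑ i, c u i * π i + ∑ y, J' (T π y u) * σ π y u) :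
    ConcaveOn ℝ (stdSimplex ℝ (Fin X)) J ∧
    ∀ π ∈ stdSimplex ℝ (Fin X),
      (∃ u : Fin U, ∃ f : Fin Y → Fin X → ℝ, (∀ y, f y ∈ Γ') ∧
          J π = ∑ i, (∑ y, (c u i / (Y : ℝ) + ∑ j, P u i j * B u j y * f y j)) * π i) ∧
      (∀ u : Fin U, ∀ f : Fin Y → Fin X → ℝ, (∀ y, f y ∈ Γ') →
          J π ≤ ∑ i, (∑ y, (c u i / (Y : ℝ) + ∑ j, P u i j * B u j y * f y j)) * π i) := by
  classical
  have hYne : (Y : ℝ) ≠ 0 := Nat.cast_ne_zero.mpr hY.ne'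
  -- positivity of the normalization factor
  have hσpos : ∀ π ∈ stdSimplex ℝ (Fin X), ∀ (y : Fin Y) (u : Fin U), 0 < σ π y u := by
    intro π hπ y u
    rw [hσ]
    have hnn : ∀ j : Fin X, 0 ≤ (∑ m, P u m j * π m) := fun j =>
      Finset.sum_nonneg fun m _ => mul_nonneg ((hPstoch u).1 m j) (hπ.1 m)
    have hsum : ∑ j, (∑ m, P u m j * π m) = 1 := by
      rw [Finset.sum_comm]
      calc ∑ m, ∑ j, P u m j * π m = ∑ m, (∑ j, P u m j) * π m := by
            simp [Finset.sum_mul]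
        _ = ∑ m, π m :=
            Finset.sum_congr rfl fun m _ => by rw [(hPstoch u).2 m, one_mul]
        _ = 1 := hπ.2
    have hex : ∃ j : Fin X, 0 < ∑ m, P u m j * π m := by
      by_contra h
      push_neg at h
      have h0 : ∑ j : Fin X, (∑ m, P u m j * π m) = 0 :=
        Finset.sum_eq_zero fun j _ => le_antisymm (h j) (hnn j)
      rw [hsum] at h0; norm_num at h0
    obtain ⟨j0, hj0⟩ := hex
    exact Finset.sum_pos' (fun j _ => mul_nonneg (hnn j) (hBpos u j y).le)
      ⟨j0, Finset.mem_univ _, mul_pos hj0 (hBpos u j0 y)⟩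
  -- T maps the simplex into the simplex
  have hTmem : ∀ π ∈ stdSimplex ℝ (Fin X), ∀ (y : Fin Y) (u : Fin U),
      T π y u ∈ stdSimplex ℝ (Fin X) := by
    intro π hπ y u
    have hσp := hσpos π hπ y u
    constructor
    · intro i
      rw [hT]
      exact div_nonneg (mul_nonneg (hBpos u i y).le
        (Finset.sum_nonneg fun m _ => mul_nonneg ((hPstoch u).1 m i) (hπ.1 m))) hσp.le
    · have : ∑ i, T π y u i = (∑ i, B u i y * (∑ m, P u m i * π m)) / σ π y u := by
        rw [Finset.sum_div]
        exact Finset.sum_congr rfl fun i _ => by rw [hT]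
      rw [this, hσ]
      rw [div_eq_one_iff_eq (by rw [hσ] at hσp; exact hσp.ne')]
      exact Finset.sum_congr rfl fun i _ => mul_comm _ _
  -- key computation: T i * σ recovers the unnormalized measure
  have hTσ : ∀ π ∈ stdSimplex ℝ (Fin X), ∀ (y : Fin Y) (u : Fin U) (i : Fin X),
      T π y u i * σ π y u = B u i y * (∑ m, P u m i * π m) := by
    intro π hπ y u i
    rw [hT, div_mul_cancel₀ _ (hσpos π hπ y u).ne']
  -- per-observation representation of J'(T) * σ
  have keyY_eq : ∀ π ∈ stdSimplex ℝ (Fin X), ∀ (y : Fin Y) (u : Fin U),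
      ∃ γ ∈ Γ', J' (T π y u) * σ π y u = ∑ j, γ j * (B u j y * (∑ m, P u m j * π m)) := by
    intro π hπ y u
    obtain ⟨γ, hγ, hEq⟩ := hJ'min (T π y u) (hTmem π hπ y u)
    refine ⟨γ, hγ, ?_⟩
    rw [hEq, Finset.sum_mul]
    exact Finset.sum_congr rfl fun j _ => by
      rw [mul_assoc, hTσ π hπ y u j]
  have keyY_le : ∀ π ∈ stdSimplex ℝ (Fin X), ∀ (y : Fin Y) (u : Fin U), ∀ γ ∈ Γ',
      J' (T π y u) * σ π y u ≤ ∑ j, γ j * (B u j y * (∑ m, P u m j * π m)) := by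
    intro π hπ y u γ hγ
    have h1 : J' (T π y u) ≤ ∑ j, γ j * T π y u j := hJ'le (T π y u) (hTmem π hπ y u) γ hγ
    calc J' (T π y u) * σ π y u ≤ (∑ j, γ j * T π y u j) * σ π y u :=
          mul_le_mul_of_nonneg_right h1 (hσpos π hπ y u).le
      _ = ∑ j, γ j * (B u j y * (∑ m, P u m j * π m)) := by
          rw [Finset.sum_mul]
          exact Finset.sum_congr rfl fun j _ => by rw [mul_assoc, hTσ π hπ y u j]
  -- rearrangement of the candidate linear function
  have rearr : ∀ (u : Fin U) (f : Fin Y → Fin X → ℝ) (π : Fin X → ℝ),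
      ∑ i, (∑ y, (c u i / (Y : ℝ) + ∑ j, P u i j * B u j y * f y j)) * π i
        = ∑ i, c u i * π i + ∑ y, ∑ j, f y j * (B u j y * (∑ m, P u m j * π m)) := by
    intro u f π
    have h1 : ∀ i, ∑ y, (c u i / (Y : ℝ) + ∑ j, P u i j * B u j y * f y j)
        = c u i + ∑ y, ∑ j, P u i j * B u j y * f y j := by
      intro i
      rw [Finset.sum_add_distrib, Finset.sum_const, Finset.card_univ, Fintype.card_fin,
        nsmul_eq_mul, mul_div_cancel₀ _ hYne]
    simp only [h1, add_mul, Finset.sum_add_distrib]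
    congr 1
    calc ∑ i, (∑ y, ∑ j, P u i j * B u j y * f y j) * π i
        = ∑ i, ∑ y, (∑ j, P u i j * B u j y * f y j) * π i := by
          simp [Finset.sum_mul]
      _ = ∑ y, ∑ i, (∑ j, P u i j * B u j y * f y j) * π i := Finset.sum_comm
      _ = ∑ y, ∑ j, f y j * (B u j y * (∑ m, P u m j * π m)) := by
          refine Finset.sum_congr rfl fun y _ => ?_
          calc ∑ i, (∑ j, P u i j * B u j y * f y j) * π i
              = ∑ i, ∑ j, P u i j * B u j y * f y j * π i := by simp [Finset.sum_mul]
            _ = ∑ j, ∑ i, P u i j * B u j y * f y j * π i := Finset.sum_comm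
            _ = ∑ j, f y j * (B u j y * (∑ m, P u m j * π m)) := by
                refine Finset.sum_congr rfl fun j _ => ?_
                simp only [Finset.mul_sum]
                exact Finset.sum_congr rfl fun m _ => by ring
  -- the main pointwise-min representation
  have key : ∀ π ∈ stdSimplex ℝ (Fin X),
      (∃ u : Fin U, ∃ f : Fin Y → Fin X → ℝ, (∀ y, f y ∈ Γ') ∧
          J π = ∑ i, (∑ y, (c u i / (Y : ℝ) + ∑ j, P u i j * B u j y * f y j)) * π i) ∧
      (∀ u : Fin U, ∀ f : Fin Y → Fin X → ℝ, (∀ y, f y ∈ Γ') →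
          J π ≤ ∑ i, (∑ y, (c u i / (Y : ℝ) + ∑ j, P u i j * B u j y * f y j)) * π i) := by
    intro π hπ
    constructor
    · obtain ⟨u, hu⟩ := hJmin π hπ
      choose f hf hfEq using fun y => keyY_eq π hπ y u
      refine ⟨u, f, hf, ?_⟩
      rw [rearr u f π, hu]
      congr 1
      exact Finset.sum_congr rfl fun y _ => hfEq y
    · intro u f hf
      calc J π ≤ ∑ i, c u i * π i + ∑ y, J' (T π y u) * σ π y u := hJle π hπ u
        _ ≤ ∑ i, c u i * π i + ∑ y, ∑ j, f y j * (B u j y * (∑ m, P u m j * π m)) := by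
            refine add_le_add le_rfl (Finset.sum_le_sum fun y _ => ?_)
            exact keyY_le π hπ y u (f y) (hf y)
        _ = _ := (rearr u f π).symm
  refine ⟨⟨convex_stdSimplex ℝ (Fin X), ?_⟩, key⟩
  intro x hx y hy a b ha hb hab
  have hmem := (convex_stdSimplex ℝ (Fin X)) hx hy ha hb hab
  obtain ⟨u, f, hf, hEq⟩ := (key _ hmem).1
  have hlin : ∑ i, (∑ y', (c u i / (Y : ℝ) + ∑ j, P u i j * B u j y' * f y' j)) * (a • x + b • y) i
      = a * ∑ i, (∑ y', (c u i / (Y : ℝ) + ∑ j, P u i j * B u j y' * f y' j)) * x i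
        + b * ∑ i, (∑ y', (c u i / (Y : ℝ) + ∑ j, P u i j * B u j y' * f y' j)) * y i := by
    simp only [Pi.add_apply, Pi.smul_apply, smul_eq_mul, Finset.mul_sum]
    rw [← Finset.sum_add_distrib]
    exact Finset.sum_congr rfl fun i _ => by ring
  rw [smul_eq_mul, smul_eq_mul, hEq, hlin]
  exact add_le_add
    (mul_le_mul_of_nonneg_left ((key x hx).2 u f hf) ha)
    (mul_le_mul_of_nonneg_left ((key y hy).2 u f hf) hb)
end
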